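/- arXiv:1609.04717 — 7 statements merged into one kernel-verified Lean document; each statement's English description precedes it below -/
import Mathlib

section
/- Let M be an abelian group (regarded as discrete) and let M^∨ be its Pontryagin dual. A character χ ∈ M^∨ lies in the path component of the trivial character if and only if there exists an additive group homomorphism f : M → ℝ with χ = π ∘ f, where π : ℝ → ℝ/ℤ is the canonical projection. In other words, the path component of the identity in M^∨ is precisely the image of Hom(M, ℝ) under composition with π. -/
/-- The Pontryagin dual of a discrete abelian group `M`: all group homomorphisms
`M →+ ℝ/ℤ`, with the topology of pointwise convergence. -/
abbrev DiscretePontryaginDual (M : Type*) [AddCommGroup M] : Type _ :=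
  M →+ AddCircle (1 : ℝ)

/-- Topology of pointwise convergence on the dual. -/
noncomputable instance (M : Type*) [AddCommGroup M] : TopologicalSpace (DiscretePontryaginDual M) :=
  TopologicalSpace.induced (fun χ => (χ : M → AddCircle (1 : ℝ))) inferInstance

open Set Finset

/-- The representative of a point of `ℝ/ℤ` in `[-1/2, 1/2)`. -/
noncomputable def addCircleRep (x : AddCircle (1:ℝ)) : ℝ :=
  have : Fact ((0:ℝ) < 1) := ⟨one_pos⟩
  (AddCircle.equivIco 1 (-(2⁻¹)) x : ℝ)

lemma addCircleRep_coe (x : AddCircle (1:ℝ)) :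
    ((addCircleRep x : ℝ) : AddCircle (1:ℝ)) = x := by
  haveI : Fact ((0:ℝ) < 1) := ⟨one_pos⟩
  exact (AddCircle.equivIco 1 (-(2⁻¹))).symm_apply_apply x

lemma addCircleRep_zero : addCircleRep 0 = 0 := by
  haveI : Fact ((0:ℝ) < 1) := ⟨one_pos⟩
  have h : (0:ℝ) ∈ Ico (-(2⁻¹):ℝ) (-(2⁻¹) + 1) := by constructor <;> norm_num
  have : (AddCircle.equivIco 1 (-(2⁻¹)) ((0:ℝ) : AddCircle (1:ℝ))) = ⟨0, h⟩ := by
    rw [Equiv.apply_eq_iff_eq_symm_apply]; rfl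
  simp only [addCircleRep]
  rw [show ((0:AddCircle (1:ℝ))) = ((0:ℝ) : AddCircle (1:ℝ)) by norm_cast, this]

lemma addCircle_norm_half : ‖((-(2⁻¹):ℝ) : AddCircle (1:ℝ))‖ = 2⁻¹ := by
  rw [AddCircle.norm_eq]
  norm_num [round_eq]

lemma addCircleRep_continuousAt {x : AddCircle (1:ℝ)} (hx : ‖x‖ < 2⁻¹) :
    ContinuousAt addCircleRep x := by
  haveI : Fact ((0:ℝ) < 1) := ⟨one_pos⟩
  have hne : x ≠ ((-(2⁻¹):ℝ) : AddCircle (1:ℝ)) := by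
    intro h; rw [h, addCircle_norm_half] at hx; exact lt_irrefl _ hx
  exact continuous_subtype_val.continuousAt.comp (AddCircle.continuousAt_equivIco 1 (-(2⁻¹)) hne)

/-- A continuous real-valued function that projects to `0` in `ℝ/ℤ` and vanishes at `0`
vanishes identically. -/
lemma lift_eq_zero {g : ℝ → ℝ} (hg : Continuous g) (h0 : g 0 = 0)
    (hz : ∀ t, ((g t : ℝ) : AddCircle (1:ℝ)) = 0) : ∀ t, g t = 0 := by
  haveI : Fact ((0:ℝ) < 1) := ⟨one_pos⟩
  have hint : ∀ t, ∃ k : ℤ, g t = (k : ℝ) := by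
    intro t
    obtain ⟨k, hk⟩ := (AddCircle.coe_eq_zero_iff (1:ℝ)).mp (hz t)
    exact ⟨k, by simpa using hk.symm⟩
  intro t
  obtain ⟨k, hk⟩ := hint t
  rcases eq_or_ne k 0 with h | h
  · simp [hk, h]
  exfalso
  have hmem : ((Int.sign k : ℝ) * 2⁻¹) ∈ uIcc (g 0) (g t) := by
    rw [h0, hk]
    rcases lt_or_gt_of_ne h with hneg | hpos
    · have hk1 : k ≤ -1 := by omega
      have h1 : (k:ℝ) ≤ -1 := by exact_mod_cast hk1
      have : (Int.sign k : ℝ) = -1 := by rw [Int.sign_eq_neg_one_of_neg hneg]; norm_num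
      rw [this]
      rw [Set.mem_uIcc]; right
      constructor <;> nlinarith
    · have h1 : (1:ℝ) ≤ k := by exact_mod_cast hpos
      have : (Int.sign k : ℝ) = 1 := by rw [Int.sign_eq_one_of_pos hpos]; norm_num
      rw [this]
      rw [Set.mem_uIcc]; left
      constructor <;> nlinarith
  have := intermediate_value_uIcc (f := g) (a := 0) (b := t) hg.continuousOn hmem
  obtain ⟨s, _, hs⟩ := this
  obtain ⟨j, hj⟩ := hint s
  rw [hj] at hs
  have h2 : ((2 * j : ℤ) : ℝ) = (Int.sign k : ℝ) := by push_cast; linarith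
  have h3 : (2 * j : ℤ) = Int.sign k := by exact_mod_cast h2
  rcases lt_or_gt_of_ne h with hneg | hpos
  · rw [Int.sign_eq_neg_one_of_neg hneg] at h3; omega
  · rw [Int.sign_eq_one_of_pos hpos] at h3; omega

/-- Path lifting along `ℝ → ℝ/ℤ`, for the clamped path `t ↦ c (min (max t 0) 1)`. -/
lemma exists_lift (c : ℝ → AddCircle (1:ℝ)) (hc : Continuous c) :
    ∃ L : ℝ → ℝ, Continuous L ∧ L 0 = 0 ∧
      ∀ t, ((L t : ℝ) : AddCircle (1:ℝ)) = c (min (max t 0) 1) - c 0 := by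
  have hucon : UniformContinuousOn c (Icc 0 1) :=
    isCompact_Icc.uniformContinuousOn_of_continuous hc.continuousOn
  obtain ⟨δ, hδ, hδ'⟩ := (Metric.uniformContinuousOn_iff).mp hucon 2⁻¹ (by norm_num)
  obtain ⟨n, hn⟩ := exists_nat_one_div_lt hδ
  set N : ℕ := n + 1 with hN
  have hN0 : (0:ℝ) < N := by positivity
  have h1N : (1:ℝ)/N < δ := by exact_mod_cast hn
  set u : ℕ → ℝ → ℝ := fun k t => min (max t 0) (k / N) with hu
  have humem : ∀ k t, k ≤ N → u k t ∈ Icc (0:ℝ) 1 := by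
    intro k t hk
    refine ⟨le_min (le_max_right t 0) (by positivity), ?_⟩
    refine min_le_of_right_le ?_
    rw [div_le_one hN0]
    exact_mod_cast hk
  have hmono : ∀ k t, u k t ≤ u (k+1) t := by
    intro k t
    apply min_le_min le_rfl
    gcongr
    exact_mod_cast Nat.le_succ k
  have hudiff : ∀ k t, |u (k+1) t - u k t| < δ := by
    intro k t
    rw [abs_of_nonneg (sub_nonneg.2 (hmono k t))]
    have hkk : ((k:ℕ):ℝ)/N ≤ ((k+1:ℕ):ℝ)/N := by gcongr; exact_mod_cast Nat.le_succ k
    rcases le_total (max t 0) ((k:ℝ)/N) with h | h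
    · have e1 : u k t = max t 0 := min_eq_left h
      have e2 : u (k+1) t = max t 0 := min_eq_left (h.trans hkk)
      rw [e1, e2]; simpa using hδ
    · have e1 : u k t = (k:ℝ)/N := min_eq_right h
      have e2 : u (k+1) t ≤ ((k+1:ℕ):ℝ)/N := min_le_right _ _
      have : ((k+1:ℕ):ℝ)/N - (k:ℝ)/N = 1/N := by push_cast; ring
      calc u (k+1) t - u k t ≤ ((k+1:ℕ):ℝ)/N - (k:ℝ)/N := by rw [e1]; linarith
        _ = 1/N := this
        _ < δ := h1N
  set v : ℕ → ℝ → AddCircle (1:ℝ) := fun k t => c (u (k+1) t) - c (u k t) with hv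
  have hvnorm : ∀ k t, k < N → ‖v k t‖ < 2⁻¹ := by
    intro k t hk
    have h1 := humem (k+1) t (by omega)
    have h2 := humem k t (by omega)
    have := hδ' _ h1 _ h2 (by rw [Real.dist_eq]; exact hudiff k t)
    rwa [dist_eq_norm] at this
  set L : ℝ → ℝ := fun t => ∑ k ∈ Finset.range N, addCircleRep (v k t) with hL
  have hvcont : ∀ k, Continuous fun t => v k t := by
    intro k
    exact (hc.comp ((continuous_id.max continuous_const).min continuous_const)).sub
      (hc.comp ((continuous_id.max continuous_const).min continuous_const))
  refine ⟨L, ?_, ?_, ?_⟩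
  · apply continuous_finset_sum
    intro k hk
    rw [continuous_iff_continuousAt]
    intro t
    exact (addCircleRep_continuousAt (hvnorm k t (Finset.mem_range.mp hk))).comp
      ((hvcont k).continuousAt)
  · have hu0 : ∀ k, u k 0 = 0 := by
      intro k
      simp only [hu]
      have : max (0:ℝ) 0 = 0 := max_self 0
      rw [this, min_eq_left (by positivity)]
    simp only [hL]
    apply Finset.sum_eq_zero
    intro k _
    have : v k 0 = 0 := by simp only [hv, hu0, sub_self]
    rw [this, addCircleRep_zero]
  · intro t
    have key : ((L t : ℝ) : AddCircle (1:ℝ)) = ∑ k ∈ Finset.range N, v k t := by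
      calc ((L t : ℝ) : AddCircle (1:ℝ))
          = (QuotientAddGroup.mk' (AddSubgroup.zmultiples (1:ℝ)))
              (∑ k ∈ Finset.range N, addCircleRep (v k t)) := rfl
        _ = ∑ k ∈ Finset.range N,
              (QuotientAddGroup.mk' (AddSubgroup.zmultiples (1:ℝ))) (addCircleRep (v k t)) :=
            map_sum _ _ _
        _ = ∑ k ∈ Finset.range N, v k t :=
            Finset.sum_congr rfl fun k _ => addCircleRep_coe _
    rw [key]
    have htel : ∑ k ∈ Finset.range N, v k t = c (u N t) - c (u 0 t) :=
      Finset.sum_range_sub (fun k => c (u k t)) N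
    rw [htel]
    have e1 : u N t = min (max t 0) 1 := by
      simp only [hu]
      rw [div_self hN0.ne']
    have e2 : u 0 t = 0 := by
      simp only [hu, Nat.cast_zero, zero_div]
      exact min_eq_right (le_max_right t 0)
    rw [e1, e2]

/-- A character `χ : M → ℝ/ℤ` lies in the path component of the trivial character of the
Pontryagin dual of a discrete abelian group `M` if and only if it lifts to a group
homomorphism `M → ℝ`. -/
theorem mem_pathComponent_zero_iff_lifts {M : Type*} [AddCommGroup M]
    (χ : DiscretePontryaginDual M) :
    χ ∈ pathComponent (0 : DiscretePontryaginDual M) ↔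
      ∃ f : M →+ ℝ, ∀ m : M, χ m = (f m : AddCircle (1 : ℝ)) := by
  constructor
  · intro h
    obtain ⟨γ⟩ := h
    set c : M → ℝ → AddCircle (1:ℝ) := fun m s => γ.extend s m with hcdef
    have hccont : ∀ m, Continuous (c m) :=
      fun m => ((continuous_apply m).comp continuous_induced_dom).comp γ.continuous_extend
    have hclamp : ∀ m t, c m (min (max t 0) 1) = c m t := by
      intro m t
      have hext : γ.extend (min (max t 0) 1) = γ.extend t := by
        show γ (Set.projIcc 0 1 zero_le_one (min (max t 0) 1)) = γ (Set.projIcc 0 1 zero_le_one t)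
        congr 1
        rcases le_total t 0 with h | h
        · have h1 : max t 0 = 0 := max_eq_right h
          rw [h1, min_eq_left zero_le_one, Set.projIcc_of_le_left _ le_rfl,
            Set.projIcc_of_le_left _ h]
        · have h1 : max t 0 = t := max_eq_left h
          rcases le_total 1 t with h2 | h2
          · rw [h1, min_eq_right h2, Set.projIcc_of_right_le _ le_rfl,
              Set.projIcc_of_right_le _ h2]
          · rw [h1, min_eq_left h2]
      simp only [hcdef]
      rw [hext]
    have hc0 : ∀ m, c m 0 = 0 := by
      intro m
      simp only [hcdef]
      rw [Path.extend_zero]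
      rfl
    choose L hLc hL0 hLt using fun m => exists_lift (c m) (hccont m)
    have hlift : ∀ m t, ((L m t : ℝ) : AddCircle (1:ℝ)) = c m t := by
      intro m t
      rw [hLt m t, hclamp, hc0, sub_zero]
    have key : ∀ m m', L (m + m') 1 = L m 1 + L m' 1 := by
      intro m m'
      have hg : ∀ t, ((L m t + L m' t - L (m + m') t : ℝ) : AddCircle (1:ℝ)) = 0 := by
        intro t
        have : ((L m t + L m' t - L (m + m') t : ℝ) : AddCircle (1:ℝ))
            = ((L m t : ℝ) : AddCircle (1:ℝ)) + ((L m' t : ℝ) : AddCircle (1:ℝ))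
              - ((L (m + m') t : ℝ) : AddCircle (1:ℝ)) := by
          show (QuotientAddGroup.mk' (AddSubgroup.zmultiples (1:ℝ)))
              (L m t + L m' t - L (m + m') t) = _
          rw [map_sub, map_add]
          rfl
        rw [this, hlift, hlift, hlift]
        have : c (m + m') t = c m t + c m' t := map_add (γ.extend t) m m'
        rw [this]
        abel
      have := lift_eq_zero (g := fun t => L m t + L m' t - L (m + m') t)
        (((hLc m).add (hLc m')).sub (hLc (m + m')))
        (by simp only [hL0]; ring) hg 1
      linarith [this]
    refine ⟨AddMonoidHom.mk' (fun m => L m 1) key, ?_⟩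
    intro m
    have h1 := hlift m 1
    simp only [AddMonoidHom.mk'_apply]
    rw [h1]
    simp only [hcdef]
    rw [Path.extend_one]
  · rintro ⟨f, hf⟩
    have hcoeadd : ∀ x y : ℝ, ((x + y : ℝ) : AddCircle (1:ℝ)) = (x : AddCircle (1:ℝ)) + y :=
      fun x y => rfl
    refine ⟨⟨⟨fun t => AddMonoidHom.mk'
        (fun m => (((t : ℝ) * f m : ℝ) : AddCircle (1:ℝ))) ?_, ?_⟩, ?_, ?_⟩⟩
    · intro a b
      show (((t : ℝ) * f (a + b) : ℝ) : AddCircle (1:ℝ)) = _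
      rw [map_add, mul_add]
      exact hcoeadd _ _
    · apply continuous_induced_rng.2
      apply continuous_pi
      intro m
      exact (AddCircle.continuous_mk' 1).comp (continuous_subtype_val.mul continuous_const)
    · ext m
      simp
    · ext m
      simp only [AddMonoidHom.mk'_apply]
      rw [show ((1 : unitInterval) : ℝ) = 1 from rfl, one_mul]
      exact (hf m).symm
end

section
/- Let V be a vector space over ℚ, regarded as a discrete abelian group. Then the fundamental group of the Pontryagin dual V^∨ based at the trivial character is trivial: every loop in V^∨ based at the trivial character is homotopic (rel endpoints) to the constant loop. -/
open unitInterval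

open AddCircle Set
noncomputable def L (x : AddCircle (1:ℝ)) : ℝ := (equivIco 1 (-(1/2)) x : ℝ)
lemma L_coe (x : AddCircle (1:ℝ)) : ((L x : ℝ) : AddCircle (1:ℝ)) = x :=
  (equivIco 1 (-(1/2))).symm_apply_apply x
lemma L_zero : L 0 = 0 := by
  have h1 : L 0 ∈ Ico (-(1/2) : ℝ) (-(1/2) + 1) := (equivIco 1 (-(1/2)) 0).2
  have h2 : (0:ℝ) ∈ Ico (-(1/2) : ℝ) (-(1/2) + 1) := by constructor <;> norm_num
  have := L_coe 0
  refine (AddCircle.coe_eq_coe_iff_of_mem_Ico h1 h2).mp ?_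
  rw [this, QuotientAddGroup.mk_zero]
lemma norm_half : ‖((-(1/2) : ℝ) : AddCircle (1:ℝ))‖ = 1/2 := by
  rw [AddCircle.norm_eq, show round ((1:ℝ)⁻¹ * -(1/2)) = 0 by
    rw [round_eq]; norm_num]
  norm_num
lemma L_contAt (x : AddCircle (1:ℝ)) (h : ‖x‖ < 1/2) : ContinuousAt L x := by
  have hne : x ≠ ((-(1/2):ℝ) : AddCircle (1:ℝ)) := by
    intro e; rw [e, norm_half] at h; linarith
  exact continuous_subtype_val.continuousAt.comp (continuousAt_equivIco 1 (-(1/2)) hne)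

lemma min_sub_min (t a b : ℝ) (h : a ≤ b) : |min t b - min t a| ≤ b - a := by
  rcases le_total t a with h'|h'
  · rw [min_eq_left h', min_eq_left (h'.trans h)]; simp [h]
  · rw [min_eq_right h']
    rcases le_total t b with h''|h''
    · rw [min_eq_left h'', abs_of_nonneg (by linarith)]; linarith
    · rw [min_eq_right h'', abs_of_nonneg (by linarith)]

open unitInterval in
lemma exists_lift_s6 (φ : C(I, AddCircle (1:ℝ))) (h0 : φ 0 = 0) :
    ∃ g : C(I, ℝ), g 0 = 0 ∧ ∀ t, ((g t : ℝ) : AddCircle (1:ℝ)) = φ t := by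
  set f : ℝ → AddCircle (1:ℝ) := φ ∘ (Set.projIcc (0:ℝ) 1 zero_le_one) with hf
  have hfc : Continuous f := φ.continuous.comp continuous_projIcc
  have hfu : UniformContinuous f :=
    (CompactSpace.uniformContinuous_of_continuous φ.continuous).comp
      (LipschitzWith.projIcc zero_le_one).uniformContinuous
  obtain ⟨δ, hδ, hδ'⟩ := Metric.uniformContinuous_iff.mp hfu (1/2) (by norm_num)
  obtain ⟨n, hn⟩ := exists_nat_one_div_lt hδ
  have hn0 : (0:ℝ) < (n:ℝ) + 1 := by positivity
  set N : ℕ := n + 1 with hN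
  have hN0 : (0:ℝ) < (N:ℝ) := by push_cast [hN]; positivity
  -- key: the increments are small
  have key : ∀ (t : ℝ) (k : ℕ),
      ‖f (min t ((k+1)/N)) - f (min t (k/N))‖ < 1/2 := by
    intro t k
    rw [← dist_eq_norm]
    apply hδ'
    rw [Real.dist_eq]
    calc |min t (((k:ℝ)+1)/N) - min t ((k:ℝ)/N)| ≤ ((k:ℝ)+1)/N - (k:ℝ)/N := by
          apply min_sub_min; gcongr; linarith
      _ = 1/N := by ring
      _ < δ := by rw [hN]; push_cast; exact hn
  set g : ℝ → ℝ :=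
    fun t => ∑ k ∈ Finset.range N, L (f (min t (((k:ℝ)+1)/N)) - f (min t ((k:ℝ)/N))) with hg
  have hinner : ∀ (c c' : ℝ), Continuous fun t => f (min t c) - f (min t c') := fun c c' =>
    (hfc.comp (continuous_id.min continuous_const)).sub
      (hfc.comp (continuous_id.min continuous_const))
  have hgc : Continuous g := by
    apply continuous_finset_sum
    intro k _
    rw [continuous_iff_continuousAt]
    intro t
    show ContinuousAt (L ∘ (fun t => f (min t (((k:ℝ)+1)/N)) - f (min t ((k:ℝ)/N)))) t
    exact ContinuousAt.comp (g := L)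
      (f := fun t => f (min t (((k:ℝ)+1)/N)) - f (min t ((k:ℝ)/N))) (x := t)
      (L_contAt _ (key t k)) (hinner _ _).continuousAt
  have hmk : ∀ τ : I, ((g τ : ℝ) : AddCircle (1:ℝ)) = φ τ := by
    intro τ
    have cast_sum : ((g τ : ℝ) : AddCircle (1:ℝ)) =
        ∑ k ∈ Finset.range N,
          (f (min (τ:ℝ) (((k:ℝ)+1)/N)) - f (min (τ:ℝ) ((k:ℝ)/N))) := by
      rw [hg]
      push_cast
      rw [QuotientAddGroup.mk_sum]
      exact Finset.sum_congr rfl fun k _ => L_coe _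
    rw [cast_sum]
    have tele := Finset.sum_range_sub (fun k : ℕ => f (min (τ:ℝ) ((k:ℝ)/N))) N
    simp only [Nat.cast_add, Nat.cast_one, Nat.cast_zero] at tele
    rw [tele, div_self hN0.ne', zero_div, min_eq_left (τ.2.2 : (τ:ℝ) ≤ 1),
      min_eq_right (τ.2.1 : (0:ℝ) ≤ τ)]
    have hf0 : f 0 = 0 := by
      rw [hf]
      simp only [Function.comp_apply, Set.projIcc_left]
      exact h0
    have hfτ : f (τ:ℝ) = φ τ := by
      rw [hf]
      simp only [Function.comp_apply]
      congr 1
      exact Set.projIcc_of_mem zero_le_one τ.2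
    rw [hf0, hfτ, sub_zero]
  have hg0 : g 0 = 0 := by
    rw [hg]
    simp only
    apply Finset.sum_eq_zero
    intro k _
    have e1 : min (0:ℝ) (((k:ℝ)+1)/N) = 0 := min_eq_left (by positivity)
    have e2 : min (0:ℝ) ((k:ℝ)/N) = 0 := min_eq_left (by positivity)
    rw [e1, e2, sub_self, L_zero]
  refine ⟨⟨fun τ : I => g τ, hgc.comp continuous_subtype_val⟩, ?_, fun τ => hmk τ⟩
  exact hg0

open unitInterval in
lemma lift_unique {g₁ g₂ : I → ℝ} (hc₁ : Continuous g₁) (hc₂ : Continuous g₂)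
    (hmk : ∀ t, ((g₁ t : ℝ) : AddCircle (1:ℝ)) = ((g₂ t : ℝ) : AddCircle (1:ℝ)))
    (h0 : g₁ 0 = g₂ 0) (t : I) : g₁ t = g₂ t := by
  have hint : ∀ s : I, ∃ m : ℤ, g₁ s - g₂ s = m := by
    intro s
    have h : ((g₁ s - g₂ s : ℝ) : AddCircle (1:ℝ)) = 0 := by
      rw [QuotientAddGroup.mk_sub, hmk s, sub_self]
    obtain ⟨m, hm⟩ := (AddCircle.coe_eq_zero_iff _).mp h
    exact ⟨m, by rw [← hm]; simp⟩
  choose m hm using hint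
  have hmc : Continuous fun s => ((m s : ℤ) : ℝ) := by
    have e : (fun s => ((m s : ℤ) : ℝ)) = fun s => g₁ s - g₂ s := funext fun s => (hm s).symm
    rw [e]; exact hc₁.sub hc₂
  have hmcont : Continuous m :=
    (Int.isClosedEmbedding_coe_real.isEmbedding.continuous_iff).mpr hmc
  have hconst : m t = m 0 := PreconnectedSpace.constant inferInstance hmcont
  have h1 := hm t
  have h2 := hm 0
  rw [hconst] at h1
  rw [h0, sub_self] at h2
  rw [← h2] at h1
  linarith

/-- For a `ℚ`-vector space `V` (regarded as a discrete abelian group), the fundamental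
group of the Pontryagin dual `V^∨` at the trivial character is trivial: every loop based
at the trivial character is homotopic rel endpoints to the constant loop. -/
theorem pontryaginDual_loop_nullhomotopic (V : Type*) [AddCommGroup V] [Module ℚ V]
    (γ : Path (0 : DiscretePontryaginDual V) (0 : DiscretePontryaginDual V)) :
    γ.Homotopic (Path.refl (0 : DiscretePontryaginDual V)) := by
  have heval : ∀ v : V, Continuous fun χ : DiscretePontryaginDual V => χ v :=
    fun v => (continuous_apply v).comp continuous_induced_dom
  have hγc : ∀ v : V, Continuous fun t : I => γ t v :=
    fun v => (heval v).comp γ.continuous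
  have hγ0 : ∀ v : V, γ 0 v = 0 := fun v => by rw [γ.source]; rfl
  have hγ1 : ∀ v : V, γ 1 v = 0 := fun v => by rw [γ.target]; rfl
  choose g hg0 hgmk using fun v : V =>
    exists_lift_s6 ⟨fun t => γ t v, hγc v⟩ (hγ0 v)
  simp only [ContinuousMap.coe_mk] at hgmk
  -- g 0 = 0
  have hzero : ∀ t : I, g (0 : V) t = 0 := by
    intro t
    refine lift_unique (g₂ := fun _ => (0:ℝ)) (g 0).continuous continuous_const
      (fun t => ?_) (by simp [hg0]) t
    rw [hgmk 0 t, QuotientAddGroup.mk_zero]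
    exact (map_zero (γ t)).symm ▸ rfl
  -- additivity
  have hadd : ∀ (v w : V) (t : I), g (v + w) t = g v t + g w t := by
    intro v w t
    refine lift_unique (g₂ := fun t => g v t + g w t) (g (v+w)).continuous
      ((g v).continuous.add (g w).continuous) (fun t => ?_) (by simp [hg0]) t
    show ((g (v+w) t : ℝ) : AddCircle (1:ℝ)) = ((g v t + g w t : ℝ) : AddCircle (1:ℝ))
    rw [hgmk (v+w) t, QuotientAddGroup.mk_add, hgmk v t, hgmk w t, map_add]
  -- nsmul
  have hnsmul : ∀ (n : ℕ) (v : V) (t : I), g (n • v) t = n * g v t := by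
    intro n v t
    induction n with
    | zero => simp [zero_nsmul, hzero]
    | succ k ih => rw [succ_nsmul, hadd, ih]; push_cast; ring
  -- the endpoint values are integers
  have hint : ∀ v : V, ∃ m : ℤ, g v 1 = m := by
    intro v
    have h : ((g v 1 : ℝ) : AddCircle (1:ℝ)) = 0 := by rw [hgmk v 1, hγ1]
    obtain ⟨m, hm⟩ := (AddCircle.coe_eq_zero_iff _).mp h
    exact ⟨m, by rw [← hm]; simp⟩
  -- endpoint values vanish by divisibility
  have hend : ∀ v : V, g v 1 = 0 := by
    intro v
    obtain ⟨m, hm⟩ := hint v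
    set n : ℕ := m.natAbs + 1 with hn
    clear_value n
    have hnQ : ((n:ℚ)) ≠ 0 := by rw [hn]; push_cast; positivity
    have hsm : (n : ℕ) • (((n:ℚ))⁻¹ • v) = v := by
      rw [← Nat.cast_smul_eq_nsmul ℚ, smul_smul, mul_inv_cancel₀ hnQ, one_smul]
    obtain ⟨m', hm'⟩ := hint (((n:ℚ))⁻¹ • v)
    have hdiv := hnsmul n (((n:ℚ))⁻¹ • v) 1
    rw [hsm, hm, hm'] at hdiv
    have hmeq : m = (n : ℤ) * m' := by
      exact_mod_cast hdiv
    have hm0 : m = 0 := by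
      rcases eq_or_ne m' 0 with h'|h'
      · rw [hmeq, h', mul_zero]
      · exfalso
        have h1 : (n : ℤ) ≤ m.natAbs := by
          calc (n:ℤ) = (n:ℤ) * 1 := by ring
            _ ≤ (n:ℤ) * |m'| := by
                have hab : (1:ℤ) ≤ |m'| := Int.one_le_abs h'
                have hn0 : (0:ℤ) < n := by rw [hn]; push_cast; positivity
                nlinarith
            _ = |m| := by rw [hmeq, abs_mul, abs_of_nonneg (Int.natCast_nonneg n)]
            _ = m.natAbs := (Int.abs_eq_natAbs m)
        omega
    rw [hm, hm0, Int.cast_zero]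
  -- build the homotopy
  let Hfun : I × I → DiscretePontryaginDual V := fun p =>
    { toFun := fun v => (((1 - ((p.1 : ℝ))) * g v p.2 : ℝ) : AddCircle (1:ℝ))
      map_zero' := by
        show ((((1 - ((p.1 : ℝ))) * g (0:V) p.2 : ℝ)) : AddCircle (1:ℝ)) = 0
        rw [hzero, mul_zero, QuotientAddGroup.mk_zero]
      map_add' := fun v w => by
        show ((((1 - ((p.1 : ℝ))) * g (v+w) p.2 : ℝ)) : AddCircle (1:ℝ)) =
          ((((1 - ((p.1 : ℝ))) * g v p.2 : ℝ)) : AddCircle (1:ℝ)) +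
          ((((1 - ((p.1 : ℝ))) * g w p.2 : ℝ)) : AddCircle (1:ℝ))
        rw [hadd, mul_add, QuotientAddGroup.mk_add] }
  have hHc : Continuous Hfun := by
    apply continuous_induced_rng.2
    apply continuous_pi
    intro v
    exact continuous_quotient_mk'.comp
      ((continuous_const.sub (continuous_subtype_val.comp continuous_fst)).mul
        ((g v).continuous.comp continuous_snd))
  refine ⟨{ toFun := Hfun
            continuous_toFun := hHc
            map_zero_left := ?_
            map_one_left := ?_
            prop' := ?_ }⟩
  · intro t
    ext v
    show ((((1 - (((0:I) : ℝ))) * g v t : ℝ)) : AddCircle (1:ℝ)) = γ t v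
    rw [Set.Icc.coe_zero, sub_zero, one_mul, hgmk]
  · intro t
    ext v
    show ((((1 - (((1:I) : ℝ))) * g v t : ℝ)) : AddCircle (1:ℝ)) = Path.refl (0 : DiscretePontryaginDual V) t v
    rw [Set.Icc.coe_one, sub_self, zero_mul, QuotientAddGroup.mk_zero]
    rfl
  · intro s x hx
    rcases hx with h | h
    · subst h
      ext v
      show ((((1 - ((s : ℝ))) * g v 0 : ℝ)) : AddCircle (1:ℝ)) = γ 0 v
      rw [hg0, mul_zero, QuotientAddGroup.mk_zero, hγ0]
    · rw [Set.mem_singleton_iff] at h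
      subst h
      ext v
      show ((((1 - ((s : ℝ))) * g v 1 : ℝ)) : AddCircle (1:ℝ)) = γ 1 v
      rw [hend, mul_zero, QuotientAddGroup.mk_zero, hγ1]
end

section
/- Let M be an abelian group. The prime spectrum Spec ℂ[M] of the group algebra of M over the complex numbers is connected (as a topological space with the Zariski topology) if and only if M is torsion-free. -/
/-!
A torsion-free abelian group embeds into its divisible hull, a `ℚ`-vector space, so it has unique
products and `ℂ[M]` is a domain, whose spectrum is irreducible. Conversely, if `g ≠ 1` has finite
order `n`, then `(1 / n) ∑_{i < n} [g]ⁱ` is an idempotent other than `0` and `1`, and its basic open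
set is a clopen subset of `Spec ℂ[M]` other than `∅` and the whole space.
-/

def Monoid.IsTorsionFree (G : Type*) [Monoid G] : Prop :=
  ∀ g : G, g ≠ 1 → ¬IsOfFinOrder g

open Finset MonoidAlgebra PrimeSpectrum

theorem Monoid.isTorsionFree_iff_isMulTorsionFree (G : Type*) [CommGroup G] :
    Monoid.IsTorsionFree G ↔ IsMulTorsionFree G :=
  isMulTorsionFree_iff_not_isOfFinOrder.symm

theorem UniqueSums.of_isAddTorsionFree (G : Type*) [AddCommGroup G] [IsAddTorsionFree G] :
    UniqueSums G :=
  .of_injective_addHom (DivisibleHull.coeAddMonoidHom G).toAddHom DivisibleHull.coe_injective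
    inferInstance

theorem UniqueProds.of_isMulTorsionFree (G : Type*) [CommGroup G] [IsMulTorsionFree G] :
    UniqueProds G :=
  have := UniqueSums.of_isAddTorsionFree (Additive G)
  inferInstanceAs (UniqueProds (Multiplicative (Additive G)))

theorem PrimeSpectrum.eq_zero_or_eq_one_of_isIdempotentElem {R : Type*} [CommRing R]
    [PreconnectedSpace (PrimeSpectrum R)] {e : R} (he : IsIdempotentElem e) : e = 0 ∨ e = 1 := by
  have hclopen : IsClopen (basicOpen e : Set (PrimeSpectrum R)) := isClopen_iff.mpr ⟨e, he, rfl⟩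
  refine (_root_.isClopen_iff.mp hclopen).imp (fun h ↦ ?_) (fun h ↦ ?_)
  · exact basicOpen_injOn_isIdempotentElem he .zero (SetLike.ext' (by simpa using h))
  · exact basicOpen_injOn_isIdempotentElem he .one (SetLike.ext' (by simpa using h))

section GeomSum

variable {A : Type*} [Ring A] {x : A} {n : ℕ}

theorem mul_geom_sum_of_pow_eq_one (hx : x ^ n = 1) :
    x * ∑ i ∈ range n, x ^ i = ∑ i ∈ range n, x ^ i := by
  have := mul_geom_sum x n
  rwa [hx, sub_self, sub_mul, one_mul, sub_eq_zero] at this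

theorem pow_mul_geom_sum_of_pow_eq_one (hx : x ^ n = 1) (k : ℕ) :
    x ^ k * ∑ i ∈ range n, x ^ i = ∑ i ∈ range n, x ^ i := by
  induction k with
  | zero => rw [pow_zero, one_mul]
  | succ k ih => rw [pow_succ, mul_assoc, mul_geom_sum_of_pow_eq_one hx, ih]

theorem geom_sum_mul_self_of_pow_eq_one (hx : x ^ n = 1) :
    (∑ i ∈ range n, x ^ i) * ∑ i ∈ range n, x ^ i = n • ∑ i ∈ range n, x ^ i := by
  simp only [sum_mul, pow_mul_geom_sum_of_pow_eq_one hx, sum_const, card_range]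

theorem isIdempotentElem_inv_smul_geom_sum {K : Type*} [Field K] [Algebra K A] (hx : x ^ n = 1)
    (hn : (n : K) ≠ 0) : IsIdempotentElem ((n : K)⁻¹ • ∑ i ∈ range n, x ^ i) := by
  rw [IsIdempotentElem, smul_mul_smul, geom_sum_mul_self_of_pow_eq_one hx,
    ← Nat.cast_smul_eq_nsmul K, smul_smul]
  congr 1
  field_simp

end GeomSum

theorem MonoidAlgebra.exists_isIdempotentElem_ne_zero_ne_one {K M : Type*} [Field K] [CharZero K]
    [Monoid M] {g : M} (hg : g ≠ 1) (hfin : IsOfFinOrder g) :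
    ∃ e : MonoidAlgebra K M, IsIdempotentElem e ∧ e ≠ 0 ∧ e ≠ 1 := by
  set n := orderOf g
  set x := of K M g
  have hx : x ^ n = 1 := by rw [← map_pow, pow_orderOf_eq_one, map_one]
  have hn : (n : K) ≠ 0 := Nat.cast_ne_zero.mpr hfin.orderOf_pos.ne'
  refine ⟨(n : K)⁻¹ • ∑ i ∈ range n, x ^ i, isIdempotentElem_inv_smul_geom_sum hx hn, ?_, ?_⟩
  · intro h0
    -- the augmentation `K[M] → K`, `[m] ↦ 1`, sends this element to `1`
    simpa [x, hn] using congrArg (lift K K M 1) h0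
  · intro h1
    have hxe : x * ((n : K)⁻¹ • ∑ i ∈ range n, x ^ i) = (n : K)⁻¹ • ∑ i ∈ range n, x ^ i := by
      rw [mul_smul_comm, mul_geom_sum_of_pow_eq_one hx]
    rw [h1, mul_one] at hxe
    exact hg (of_injective (hxe.trans (map_one _).symm))

/-- For an abelian group `M`, the prime spectrum of the complex group algebra `ℂ[M]` is
connected if and only if `M` is torsion-free. -/
theorem primeSpectrum_monoidAlgebra_connected_iff (M : Type*) [CommGroup M] :
    ConnectedSpace (PrimeSpectrum (MonoidAlgebra ℂ M)) ↔ Monoid.IsTorsionFree M := by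
  rw [Monoid.isTorsionFree_iff_isMulTorsionFree]
  constructor
  · intro _
    by_contra h
    obtain ⟨g, hg, hfin⟩ := not_isMulTorsionFree_iff_isOfFinOrder.mp h
    obtain ⟨e, he, he0, he1⟩ := exists_isIdempotentElem_ne_zero_ne_one (K := ℂ) hg hfin
    exact (eq_zero_or_eq_one_of_isIdempotentElem he).elim he0 he1
  · intro _
    have := UniqueProds.of_isMulTorsionFree M
    infer_instance
end

section
/- Let F be a field of characteristic 0 containing a primitive n-th root of unity for every n ≥ 1, let F̄ be an algebraic closure of F, and let k be any field. Let χ : F̄ˣ → kˣ be a group homomorphism whose restriction to the group μ∞ of all roots of unity in F̄ˣ is injective. If σ ∈ Gal(F̄/F) satisfies χ ∘ σ = χ, then σ is the identity. Equivalently, Gal(F̄/F) acts freely (via σ · χ = χ ∘ σ⁻¹) on the set of group homomorphisms F̄ˣ → kˣ that are injective on μ∞. -/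
/-!
If `σ ≠ 1`, it acts nontrivially on some finite normal subextension `E`, where it restricts to an
automorphism `τ` of finite order `m > 1`. With a primitive `m`-th root of unity `ζ ∈ F`, the Lagrange
resolvent produces `y ∈ E, y ≠ 0` with `σ y = ζ y`. Then `χ ζ = χ (σ y) / χ y = 1`, contradicting
injectivity of `χ` on roots of unity.
-/

theorem AlgEquiv.exists_ne_zero_apply_eq_mul {F E : Type*} [Field F] [Field E] [Algebra F E]
    {τ : E ≃ₐ[F] E} (hτ : IsOfFinOrder τ) {ζ : F} (hζ : ζ ^ orderOf τ = 1) :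
    ∃ x : E, x ≠ 0 ∧ τ x = algebraMap F E ζ * x := by
  set η := algebraMap F E ζ
  have hη : η ^ orderOf τ = 1 := by rw [← map_pow, hζ, map_one]
  have hη0 : η ≠ 0 := by rintro h; simp [h, hτ.orderOf_pos.ne'] at hη
  have hτη : τ η = η := τ.commutes ζ
  -- Lagrange resolvent: `∑ i < m, η⁻¹ ^ i * τ ^ i z` is nonzero for some `z` by Dedekind's
  -- independence of characters, and `τ` multiplies it by `η` since the summands are `m`-periodic.
  let summand (z : E) (i : ℕ) : E := η⁻¹ ^ i * (τ ^ i) z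
  obtain ⟨z, hz⟩ : ∃ z, ∑ i ∈ Finset.range (orderOf τ), summand z i ≠ 0 := by
    have hind : LinearIndependent E
        fun i : Fin (orderOf τ) ↦ (((τ ^ (i : ℕ) : E ≃ₐ[F] E) : E →* E) : E → E) :=
      (linearIndependent_monoidHom E E).comp _ fun i j hij ↦ Fin.ext <|
        pow_injOn_Iio_orderOf i.isLt j.isLt (AlgEquiv.ext (DFunLike.congr_fun hij ·))
    by_contra! h
    have := Fintype.linearIndependent_iff.mp hind (fun i ↦ η⁻¹ ^ (i : ℕ)) (funext fun z ↦ by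
      simpa only [← Fin.sum_univ_eq_sum_range (summand z), Finset.sum_apply, Pi.smul_apply,
        smul_eq_mul, Pi.zero_apply, MonoidHom.coe_coe] using h z) ⟨0, hτ.orderOf_pos⟩
    simp at this
  have hperiod : summand z (orderOf τ) = summand z 0 := by
    simp only [summand, inv_pow, hη, pow_orderOf_eq_one, pow_zero]
  have hshift (i : ℕ) : τ (summand z i) = η * summand z (i + 1) := by
    simp only [summand, map_mul, map_pow, map_inv₀, hτη, pow_succ', AlgEquiv.mul_apply, mul_assoc,
      mul_inv_cancel_left₀ hη0]
  refine ⟨_, hz, ?_⟩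
  calc τ (∑ i ∈ Finset.range (orderOf τ), summand z i)
      = η * ∑ i ∈ Finset.range (orderOf τ), summand z (i + 1) := by
        simp only [map_sum, hshift, Finset.mul_sum]
    _ = η * ∑ i ∈ Finset.range (orderOf τ), summand z i := by
        congr 1
        have := (Finset.sum_range_succ' (summand z) (orderOf τ)).symm.trans
          (Finset.sum_range_succ (summand z) (orderOf τ))
        rwa [hperiod, add_left_inj] at this

open IntermediateField in
theorem AlgEquiv.exists_restrictNormal_ne_one {F K : Type*} [Field F] [Field K] [Algebra F K]
    [Normal F K] {σ : K ≃ₐ[F] K} (hσ : σ ≠ 1) :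
    ∃ (E : IntermediateField F K) (_ : Normal F E), FiniteDimensional F E ∧
      σ.restrictNormal E ≠ 1 := by
  obtain ⟨a, ha⟩ := DFunLike.ne_iff.mp hσ
  have : FiniteDimensional F F⟮a⟯ :=
    adjoin.finiteDimensional (Algebra.IsIntegral.isIntegral a)
  refine ⟨normalClosure F F⟮a⟯ K, normalClosure.normal F F⟮a⟯ K,
    normalClosure.is_finiteDimensional F F⟮a⟯ K, fun h ↦ ha ?_⟩
  exact (restrictNormal_eq_one_iff _ σ).mp h a (le_normalClosure F⟮a⟯ (mem_adjoin_simple_self F a))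

theorem AlgEquiv.exists_units_map_eq_mul_of_ne_one {F K : Type*} [Field F] [Field K]
    [Algebra F K] [Normal F K]
    (hroots : ∀ n : ℕ, 0 < n → ∃ ζ : F, IsPrimitiveRoot ζ n) {σ : K ≃ₐ[F] K} (hσ : σ ≠ 1) :
    ∃ ζ y : Kˣ, IsOfFinOrder ζ ∧ ζ ≠ 1 ∧ Units.map (σ : K →* K) y = ζ * y := by
  obtain ⟨E, _, _, hτ⟩ := exists_restrictNormal_ne_one hσ
  set τ := σ.restrictNormal E
  have hτfin : IsOfFinOrder τ := isOfFinOrder_of_finite τ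
  have hm : 0 < orderOf τ := hτfin.orderOf_pos
  have hm1 : 1 < orderOf τ := lt_of_le_of_ne hm fun h ↦ hτ (orderOf_eq_one_iff.mp h.symm)
  obtain ⟨ζ, hζ⟩ := hroots _ hm
  obtain ⟨x, hx0, hτx⟩ := exists_ne_zero_apply_eq_mul hτfin hζ.pow_eq_one
  have hζK : IsPrimitiveRoot (algebraMap F K ζ) (orderOf τ) :=
    hζ.map_of_injective (algebraMap F K).injective
  have hζu := hζK.isUnit_unit hm.ne'
  refine ⟨_, Units.mk0 (x : K) (by simpa using hx0), hζu.isOfFinOrder hm.ne', hζu.ne_one hm1,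
    Units.ext ?_⟩
  simpa [← restrictNormal_apply, ← IsScalarTower.algebraMap_apply] using congrArg Subtype.val hτx

theorem galois_acts_freely_on_characters_general (F Fbar k : Type*) [Field F]
    [Field Fbar] [Algebra F Fbar] [IsAlgClosure F Fbar] [Field k]
    (hroots : ∀ n : ℕ, 0 < n → ∃ ζ : F, IsPrimitiveRoot ζ n)
    (χ : Fbarˣ →* kˣ)
    (hinj : Set.InjOn χ {x : Fbarˣ | IsOfFinOrder x})
    (σ : Fbar ≃ₐ[F] Fbar)
    (hχσ : ∀ x : Fbarˣ, χ (Units.map (σ : Fbar →* Fbar) x) = χ x) :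
    σ = 1 := by
  by_contra hσ
  obtain ⟨ζ, y, hζ, hζ1, hy⟩ := σ.exists_units_map_eq_mul_of_ne_one hroots hσ
  have hχζ : χ ζ = 1 := by simpa [hy] using hχσ y
  exact hζ1 (hinj hζ IsOfFinOrder.one (by rw [hχζ, map_one]))

/-- Hilbert 90 style freeness: let `F` be a field of characteristic `0` containing a
primitive `n`-th root of unity for every `n ≥ 1`, with algebraic closure `F̄`, and let
`k` be any field.  If `χ : F̄ˣ → kˣ` is a group homomorphism injective on roots of unity
and `σ ∈ Gal(F̄/F)` satisfies `χ ∘ σ = χ`, then `σ = 1`. -/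
theorem galois_acts_freely_on_characters (F Fbar k : Type*) [Field F] [CharZero F]
    [Field Fbar] [Algebra F Fbar] [IsAlgClosure F Fbar] [Field k]
    (hroots : ∀ n : ℕ, 0 < n → ∃ ζ : F, IsPrimitiveRoot ζ n)
    (χ : Fbarˣ →* kˣ)
    (hinj : Set.InjOn χ {x : Fbarˣ | IsOfFinOrder x})
    (σ : Fbar ≃ₐ[F] Fbar)
    (hχσ : ∀ x : Fbarˣ, χ (Units.map (σ : Fbar →* Fbar) x) = χ x) :
    σ = 1 :=
  galois_acts_freely_on_characters_general F Fbar k hroots χ hinj σ hχσ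
end

section
/- Let F be a field of characteristic 0 containing a primitive n-th root of unity for every n ≥ 1, with algebraic closure F̄, and fix an injective group homomorphism ι : μ∞ → S¹ from the roots of unity of F̄ into the circle group. Then the space X_{F̄} = {χ : F̄ˣ → S¹ group homomorphism with χ|_{μ∞} = ι}, with the topology of pointwise convergence, is a nonempty, compact, Hausdorff and connected topological space; the action of Gal(F̄/F) on X_{F̄} given by σ · χ = χ ∘ σ⁻¹ is free; and the quotient space X_F = Gal(F̄/F)\X_{F̄} is a nonempty, connected, compact Hausdorff space. -/
open scoped Classical

noncomputable section

/-- The space of characters `F̄ˣ → S¹` with the topology of pointwise convergence. -/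
instance charTopology (Fbar : Type*) [Field Fbar] : TopologicalSpace (Fbarˣ →* Circle) :=
  TopologicalSpace.induced (fun χ => (χ : Fbarˣ → Circle)) inferInstance

/-- The space `X_F̄` of characters `χ : F̄ˣ → S¹` restricting to `ι` on the roots of
unity, with the topology of pointwise convergence. -/
def XChar (Fbar : Type*) [Field Fbar] (ι : (CommGroup.torsion Fbarˣ) →* Circle) : Type _ :=
  {χ : Fbarˣ →* Circle // ∀ ζ : CommGroup.torsion Fbarˣ, χ ζ = ι ζ}

instance (Fbar : Type*) [Field Fbar] (ι : (CommGroup.torsion Fbarˣ) →* Circle) :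
    TopologicalSpace (XChar Fbar ι) :=
  instTopologicalSpaceSubtype

/-- The setoid on `X_F̄` whose classes are the orbits of `Gal(F̄/K)` acting by
`σ • χ = χ ∘ σ⁻¹`. -/
def galSetoid (K : Type*) (Fbar : Type*) [Field Fbar] [CommSemiring K] [Algebra K Fbar]
    (ι : (CommGroup.torsion Fbarˣ) →* Circle) : Setoid (XChar Fbar ι) where
  r χ₁ χ₂ := ∃ σ : Fbar ≃ₐ[K] Fbar, ∀ x : Fbarˣ,
    χ₂.1 x = χ₁.1 (Units.map (σ : Fbar →* Fbar) x)
  iseqv := by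
    constructor
    · intro χ
      refine ⟨1, fun x => ?_⟩
      have h1 : Units.map ((1 : Fbar ≃ₐ[K] Fbar) : Fbar →* Fbar) x = x := by
        ext; simp
      rw [h1]
    · rintro χ₁ χ₂ ⟨σ, h⟩
      refine ⟨σ.symm, fun x => ?_⟩
      have h1 : Units.map (σ : Fbar →* Fbar) (Units.map (σ.symm : Fbar →* Fbar) x) = x := by
        ext; simp
      rw [h (Units.map (σ.symm : Fbar →* Fbar) x), h1]
    · rintro χ₁ χ₂ χ₃ ⟨σ, h⟩ ⟨τ, h'⟩
      refine ⟨τ.trans σ, fun x => ?_⟩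
      have h1 : Units.map ((τ.trans σ : Fbar ≃ₐ[K] Fbar) : Fbar →* Fbar) x
          = Units.map (σ : Fbar →* Fbar) (Units.map (τ : Fbar →* Fbar) x) := by
        ext; simp
      rw [h' x, h (Units.map (τ : Fbar →* Fbar) x), h1]

/-- The quotient `X_K = Gal(F̄/K)\X_F̄`, with the quotient topology. -/
def XF (K : Type*) (Fbar : Type*) [Field Fbar] [CommSemiring K] [Algebra K Fbar]
    (ι : (CommGroup.torsion Fbarˣ) →* Circle) : Type _ :=
  Quotient (galSetoid K Fbar ι)

instance (K : Type*) (Fbar : Type*) [Field Fbar] [CommSemiring K] [Algebra K Fbar]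
    (ι : (CommGroup.torsion Fbarˣ) →* Circle) : TopologicalSpace (XF K Fbar ι) :=
  instTopologicalSpaceQuotient

/-!
Characters of `F̄ˣ` form a compact group (a closed subset of `(S¹)^{F̄ˣ}`), and `X_F̄` is a coset
of its subgroup `K` of characters trivial on `μ∞`. The circle is an injective abelian group, so
`ι` extends and `X_F̄` is nonempty; `F̄ˣ` is divisible, so `K` is a compact divisible group and
therefore connected: an open subgroup has finite index `m` and contains all `m`-th powers.

If `σ ≠ 1`, it restricts to an automorphism `τ` of order `n > 1` of a finite normal
subextension. By Dedekind's independence of characters the minimal polynomial of `τ` is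
`Xⁿ - 1`, so a primitive `n`-th root of unity `ζ ∈ F` is an eigenvalue: `σ w = ζ w` with
`w ≠ 0`. A character fixed by `σ` then kills `ζ ≠ 1`, contradicting the injectivity of `ι`.

The Galois group is compact and acts continuously on all characters, so that action is proper
and its orbit space is Hausdorff; `X_F` injects continuously into this orbit space.
-/

open Topology

instance : DivisibleBy (Additive Circle) ℤ where
  div z n := .ofMul (Circle.exp (Complex.arg (z.toMul : ℂ) / n))
  div_zero z := by simp
  div_cancel {n} z h := by
    rw [← ofMul_zpow, ← Circle.exp_intCast_mul, mul_div_cancel₀ _ (by exact_mod_cast h),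
      Circle.exp_arg]
    rfl

theorem MonoidHom.exists_extension_to_circle {G : Type*} [CommGroup G] (H : Subgroup G)
    (f : H →* Circle) : ∃ g : G →* Circle, g.comp H.subtype = f := by
  obtain ⟨g, hg⟩ := (Module.Baer.of_divisible (Additive Circle)).extension_property_addMonoidHom
    (MonoidHom.toAdditive H.subtype) Subtype.val_injective (MonoidHom.toAdditive f)
  exact ⟨MonoidHom.toAdditive.symm g, congrArg MonoidHom.toAdditive.symm hg⟩

theorem MonoidHom.exists_pow_eq_of_torsion_le_ker {A B : Type*} [CommGroup A] [CommGroup B]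
    {n : ℕ} (hn : n ≠ 0) (hA : ∀ a : A, ∃ b, b ^ n = a) {ψ : A →* B}
    (hψ : CommGroup.torsion A ≤ ψ.ker) :
    ∃ φ : A →* B, CommGroup.torsion A ≤ φ.ker ∧ φ ^ n = ψ := by
  choose ρ hρ using hA
  have hψρ {a : A} (ha : a ^ n = 1) : ψ a = 1 :=
    hψ ((CommGroup.mem_torsion _).2 (isOfFinOrder_iff_pow_eq_one.2 ⟨n, Nat.pos_of_ne_zero hn, ha⟩))
  let φ : A →* B :=
    { toFun a := ψ (ρ a)
      map_one' := hψρ (hρ 1)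
      map_mul' a b := by
        have : ψ (ρ (a * b) / (ρ a * ρ b)) = 1 :=
          hψρ (by rw [div_pow, mul_pow, hρ, hρ, hρ, div_self'])
        rwa [map_div, div_eq_one, map_mul] at this }
  refine ⟨φ, fun ζ hζ => ?_, MonoidHom.ext fun a => ?_⟩
  · obtain ⟨m, hm, hζm⟩ := isOfFinOrder_iff_pow_eq_one.1 ((CommGroup.mem_torsion _).1 hζ)
    exact hψ ((CommGroup.mem_torsion _).2
      (isOfFinOrder_iff_pow_eq_one.2 ⟨n * m, by positivity, by rw [pow_mul, hρ, hζm]⟩))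
  · simp [φ, ← map_pow, hρ]

theorem connectedSpace_of_forall_exists_pow_eq {G : Type*} [Group G] [TopologicalSpace G]
    [IsTopologicalGroup G] [CompactSpace G] (hG : ∀ n ≠ 0, ∀ g : G, ∃ x, x ^ n = g) :
    ConnectedSpace G := by
  refine connectedSpace_iff_clopen.2 ⟨⟨1⟩, fun s hs => ?_⟩
  refine s.eq_empty_or_nonempty.imp_right fun ⟨g, hg⟩ => Set.eq_univ_of_forall fun y => ?_
  obtain ⟨H, hH⟩ := IsTopologicalGroup.exist_openNormalSubgroup_sub_clopen_nhds_of_one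
    (hs.preimage (continuous_const_mul g)) (by simpa using hg)
  have : Finite (G ⧸ (H : Subgroup G)) := H.toSubgroup.quotient_finite_of_isOpen H.isOpen
  obtain ⟨x, hx⟩ := hG (Nat.card (G ⧸ (H : Subgroup G))) Nat.card_pos.ne' (g⁻¹ * y)
  have : g⁻¹ * y ∈ (H : Subgroup G) := by
    rw [← hx, ← QuotientGroup.eq_one_iff, QuotientGroup.mk_pow]
    exact pow_card_eq_one'
  simpa using hH this

theorem properSMul_of_compactSpace {G X : Type*} [Group G] [MulAction G X] [TopologicalSpace G]
    [TopologicalSpace X] [CompactSpace G] [T2Space X] [ContinuousSMul G X] : ProperSMul G X := by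
  refine properSMul_iff_continuousSMul_ultrafilter_tendsto_t2.2 ⟨inferInstance, fun 𝒰 _ _ _ => ?_⟩
  obtain ⟨g, -, hg⟩ := isCompact_univ.ultrafilter_le_nhds' (𝒰.map Prod.fst) Filter.univ_mem
  exact ⟨g, hg⟩

theorem IsAlgClosed.exists_units_pow_eq {k : Type*} [Field k] [IsAlgClosed k] {n : ℕ}
    (hn : n ≠ 0) (a : kˣ) : ∃ b : kˣ, b ^ n = a := by
  obtain ⟨z, hz⟩ := IsAlgClosed.exists_pow_nat_eq (a : k) (Nat.pos_of_ne_zero hn)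
  have hz0 : z ≠ 0 := by rintro rfl; exact a.ne_zero (by rw [← hz, zero_pow hn])
  exact ⟨Units.mk0 z hz0, Units.ext (by simpa using hz)⟩

def torsionAnnihilator (A B : Type*) [CommGroup A] [CommGroup B] : Subgroup (A →* B) :=
  (MonoidHom.compHom' (CommGroup.torsion A).subtype).ker

theorem mem_torsionAnnihilator {A B : Type*} [CommGroup A] [CommGroup B] {ψ : A →* B} :
    ψ ∈ torsionAnnihilator A B ↔ CommGroup.torsion A ≤ ψ.ker := by
  have := MonoidHom.range_le_ker_iff (CommGroup.torsion A).subtype ψ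
  rw [Subgroup.range_subtype] at this
  exact this.symm

theorem AlgEquiv.exists_apply_eq_mul_of_isPrimitiveRoot {K L : Type*} [Field K] [Field L]
    [Algebra K L] [FiniteDimensional K L] (σ : L ≃ₐ[K] L) {ζ : K}
    (hζ : IsPrimitiveRoot ζ (orderOf σ)) : ∃ v : L, v ≠ 0 ∧ σ v = algebraMap K L ζ * v := by
  have hroot : (minpoly K σ.toLinearMap).IsRoot ζ := by
    simp [minpoly_algEquiv_toLinearMap σ (isOfFinOrder_of_finite σ), hζ.pow_eq_one]
  obtain ⟨v, hv⟩ := (Module.End.hasEigenvalue_of_isRoot hroot).exists_hasEigenvector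
  exact ⟨v, hv.2, by rw [← Algebra.smul_def]; exact hv.apply_eq_smul⟩

open IntermediateField in
theorem AlgEquiv.exists_smul_eq_mul_of_ne_one {F E : Type*} [Field F] [Field E] [Algebra F E]
    [Normal F E] (hroots : ∀ n : ℕ, 0 < n → ∃ ζ : F, IsPrimitiveRoot ζ n)
    {σ : E ≃ₐ[F] E} (hσ : σ ≠ 1) :
    ∃ u ∈ CommGroup.torsion Eˣ, u ≠ 1 ∧ ∃ x : Eˣ, σ • x = u * x := by
  obtain ⟨a, ha⟩ : ∃ a, σ a ≠ a := not_forall.1 (mt (fun h => AlgEquiv.ext h) hσ)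
  have : FiniteDimensional F F⟮a⟯ := adjoin.finiteDimensional (Algebra.IsIntegral.isIntegral a)
  let L := normalClosure F F⟮a⟯ E
  let τ := σ.restrictNormal L
  have haL : a ∈ L := le_normalClosure F⟮a⟯ (mem_adjoin_simple_self F a)
  have hτ : orderOf τ ≠ 1 := by
    rw [Ne, orderOf_eq_one_iff]
    intro h
    exact ha (by simpa [τ, h] using (σ.restrictNormal_commutes L ⟨a, haL⟩).symm)
  obtain ⟨ζ, hζ⟩ := hroots _ (orderOf_pos τ)
  obtain ⟨v, hv0, hv⟩ := τ.exists_apply_eq_mul_of_isPrimitiveRoot hζ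
  have hζE := hζ.map_of_injective (algebraMap F E).injective
  have hζ0 : algebraMap F E ζ ≠ 0 := hζE.ne_zero (orderOf_pos τ).ne'
  refine ⟨Units.mk0 _ hζ0, ?_, ?_, Units.mk0 (v : E) (by simpa using hv0), Units.ext ?_⟩
  · exact (CommGroup.mem_torsion _).2 (isOfFinOrder_iff_pow_eq_one.2
      ⟨_, orderOf_pos τ, Units.ext (by simpa using hζE.pow_eq_one)⟩)
  · have : 1 < orderOf τ := lt_of_le_of_ne (orderOf_pos τ) hτ.symm
    exact fun h => hζE.ne_one this (by simpa using congrArg Units.val h)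
  · change σ (algebraMap L E v) = algebraMap F E ζ * algebraMap L E v
    rw [← σ.restrictNormal_commutes L v, hv, map_mul, ← IsScalarTower.algebraMap_apply]

theorem AlgEquiv.eq_one_of_forall_apply_smul_eq {F E B : Type*} [Field F] [Field E]
    [Algebra F E] [Normal F E] [RightCancelMonoid B]
    (hroots : ∀ n : ℕ, 0 < n → ∃ ζ : F, IsPrimitiveRoot ζ n) {χ : Eˣ →* B}
    (hχ : Set.InjOn χ (CommGroup.torsion Eˣ)) {σ : E ≃ₐ[F] E} (h : ∀ x, χ (σ • x) = χ x) :
    σ = 1 := by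
  by_contra hσ
  obtain ⟨u, hu, hu1, x, hx⟩ := σ.exists_smul_eq_mul_of_ne_one hroots hσ
  have hχu : χ u = χ 1 := by simpa [hx] using h x
  exact hu1 (hχ hu (one_mem _) hχu)

namespace Character

variable {Fbar : Type*} [Field Fbar]

theorem isClosedEmbedding_coe :
    IsClosedEmbedding ((⇑) : (Fbarˣ →* Circle) → Fbarˣ → Circle) :=
  ⟨⟨⟨rfl⟩, DFunLike.coe_injective⟩, MonoidHom.isClosed_range_coe _ _⟩

@[fun_prop]
theorem continuous_eval (x : Fbarˣ) : Continuous fun χ : Fbarˣ →* Circle => χ x :=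
  (continuous_apply x).comp isClosedEmbedding_coe.continuous

instance : T2Space (Fbarˣ →* Circle) := isClosedEmbedding_coe.isEmbedding.t2Space

instance : CompactSpace (Fbarˣ →* Circle) := isClosedEmbedding_coe.compactSpace

instance : IsTopologicalGroup (Fbarˣ →* Circle) :=
  isClosedEmbedding_coe.isInducing.topologicalGroup (MonoidHom.coeFn Fbarˣ Circle)

theorem isClosed_setOf_forall_torsion_eq (f : CommGroup.torsion Fbarˣ → Circle) :
    IsClosed {χ : Fbarˣ →* Circle | ∀ ζ : CommGroup.torsion Fbarˣ, χ ζ = f ζ} := by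
  simp only [Set.ofPred_forall]
  exact isClosed_iInter fun ζ => isClosed_eq (continuous_eval _) continuous_const

instance : CompactSpace (torsionAnnihilator Fbarˣ Circle) := by
  refine isCompact_iff_compactSpace.1 (IsClosed.isCompact ?_)
  convert isClosed_setOf_forall_torsion_eq (Fbar := Fbar) 1
  ext ψ
  rw [SetLike.mem_coe, mem_torsionAnnihilator]
  simp [SetLike.le_def]

instance [IsAlgClosed Fbar] : ConnectedSpace (torsionAnnihilator Fbarˣ Circle) := by
  refine connectedSpace_of_forall_exists_pow_eq fun n hn ψ => ?_
  obtain ⟨φ, hφ, hφψ⟩ := MonoidHom.exists_pow_eq_of_torsion_le_ker hn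
    (IsAlgClosed.exists_units_pow_eq hn) (mem_torsionAnnihilator.1 ψ.2)
  exact ⟨⟨φ, mem_torsionAnnihilator.2 hφ⟩, Subtype.ext hφψ⟩

/-- `Gal(F̄/F)` acts on characters through `DomMulAct`, i.e. by `(σ • χ) x = χ (σ x)`; it acts
continuously because the stabilizer of every `x : F̄ˣ` is open in the Krull topology. -/
instance {F : Type*} [Field F] [Algebra F Fbar] [Algebra.IsIntegral F Fbar] :
    ContinuousSMul (Fbar ≃ₐ[F] Fbar)ᵈᵐᵃ (Fbarˣ →* Circle) := by
  let : TopologicalSpace Fbarˣ := ⊥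
  have : DiscreteTopology Fbarˣ := ⟨rfl⟩
  have : ContinuousSMul (Fbar ≃ₐ[F] Fbar) Fbarˣ :=
    continuousSMul_iff_stabilizer_isOpen.2 fun x => by
      convert stabilizer_isOpen_of_isIntegral (K := F) (x : Fbar) using 2
      ext σ
      simp [Units.ext_iff]
  have heval : Continuous fun p : Fbarˣ × (Fbarˣ →* Circle) => p.2 p.1 :=
    continuous_prod_of_discrete_left.2 continuous_eval
  refine ⟨continuous_induced_rng.2 (continuous_pi fun x => ?_)⟩
  exact heval.comp (((DomMulAct.continuous_mk_symm.comp continuous_fst).smul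
    continuous_const).prodMk continuous_snd)

end Character

namespace XChar

variable {Fbar : Type*} [Field Fbar] (ι : CommGroup.torsion Fbarˣ →* Circle)

instance : T2Space (XChar Fbar ι) :=
  inferInstanceAs (T2Space {χ : Fbarˣ →* Circle // ∀ ζ : CommGroup.torsion Fbarˣ, χ ζ = ι ζ})

instance : CompactSpace (XChar Fbar ι) :=
  isCompact_iff_compactSpace.1 (Character.isClosed_setOf_forall_torsion_eq ι).isCompact

instance : Nonempty (XChar Fbar ι) := by
  obtain ⟨χ, hχ⟩ := MonoidHom.exists_extension_to_circle _ ι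
  exact ⟨χ, fun ζ => DFunLike.congr_fun hχ ζ⟩

instance [IsAlgClosed Fbar] : ConnectedSpace (XChar Fbar ι) := by
  obtain ⟨χ₀⟩ : Nonempty (XChar Fbar ι) := inferInstance
  let translate (ψ : torsionAnnihilator Fbarˣ Circle) : XChar Fbar ι :=
    ⟨χ₀.1 * ψ, fun ζ => by
      rw [MonoidHom.mul_apply, χ₀.2 ζ, mem_torsionAnnihilator.1 ψ.2 ζ.2, mul_one]⟩
  refine Function.Surjective.connectedSpace (f := translate) (fun χ => ?_) (by fun_prop)
  refine ⟨⟨χ₀.1⁻¹ * χ.1, mem_torsionAnnihilator.2 fun ζ hζ => ?_⟩,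
    Subtype.ext (mul_inv_cancel_left χ₀.1 χ.1)⟩
  rw [MonoidHom.mem_ker, MonoidHom.mul_apply, MonoidHom.inv_apply, χ₀.2 ⟨ζ, hζ⟩, χ.2 ⟨ζ, hζ⟩,
    inv_mul_cancel]

theorem injOn_torsion {ι : CommGroup.torsion Fbarˣ →* Circle} (hι : Function.Injective ι)
    (χ : XChar Fbar ι) : Set.InjOn χ.1 (CommGroup.torsion Fbarˣ) := fun a ha b hb hab =>
  congrArg Subtype.val (hι ((χ.2 ⟨a, ha⟩).symm.trans (hab.trans (χ.2 ⟨b, hb⟩))))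

end XChar

namespace XF

variable {Fbar : Type*} [Field Fbar] (ι : CommGroup.torsion Fbarˣ →* Circle)

section CommSemiring

variable {K : Type*} [CommSemiring K] [Algebra K Fbar]

instance : Nonempty (XF K Fbar ι) := ⟨Quotient.mk'' (Classical.arbitrary _)⟩

instance : CompactSpace (XF K Fbar ι) := inferInstanceAs (CompactSpace (Quotient _))

instance [IsAlgClosed Fbar] : ConnectedSpace (XF K Fbar ι) :=
  inferInstanceAs (ConnectedSpace (Quotient _))

theorem galSetoid_rel_iff {χ₁ χ₂ : XChar Fbar ι} :
    galSetoid K Fbar ι χ₁ χ₂ ↔ χ₂.1 ∈ MulAction.orbit (Fbar ≃ₐ[K] Fbar)ᵈᵐᵃ χ₁.1 := by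
  constructor
  · rintro ⟨σ, h⟩
    exact ⟨DomMulAct.mk σ, MonoidHom.ext fun x => (h x).symm⟩
  · rintro ⟨c, hc⟩
    exact ⟨DomMulAct.mk.symm c, fun x => by rw [← hc]; rfl⟩

end CommSemiring

instance {F : Type*} [Field F] [Algebra F Fbar] [IsGalois F Fbar] : T2Space (XF F Fbar ι) := by
  have : ProperSMul (Fbar ≃ₐ[F] Fbar)ᵈᵐᵃ (Fbarˣ →* Circle) := properSMul_of_compactSpace
  let q : XF F Fbar ι → Quotient (MulAction.orbitRel (Fbar ≃ₐ[F] Fbar)ᵈᵐᵃ (Fbarˣ →* Circle)) :=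
    Quotient.map' Subtype.val fun _ _ h => (MulAction.orbitRel _ _).symm ((galSetoid_rel_iff ι).1 h)
  refine T2Space.of_injective_continuous (f := q) (fun a b hab => ?_) ?_
  · induction a, b using Quotient.inductionOn₂' with | h χ₁ χ₂ => ?_
    exact Quotient.sound'
      ((galSetoid_rel_iff ι).2 ((MulAction.orbitRel _ _).symm (Quotient.exact' hab)))
  · exact continuous_subtype_val.quotient_map' _

end XF

/-- Let `F` be a field of characteristic `0` containing all roots of unity, with algebraic
closure `F̄`, and fix an injective character `ι : μ∞ → S¹`.  Then `X_F̄` is a nonempty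
connected compact Hausdorff space, the action of `Gal(F̄/F)` on it (by `σ • χ = χ ∘ σ⁻¹`)
is free, and the quotient `X_F = Gal(F̄/F)\X_F̄` is a nonempty connected compact
Hausdorff space. -/
theorem XF_connected_compact_hausdorff (F Fbar : Type*) [Field F] [CharZero F] [Field Fbar]
    [Algebra F Fbar] [IsAlgClosure F Fbar]
    (hroots : ∀ n : ℕ, 0 < n → ∃ ζ : F, IsPrimitiveRoot ζ n)
    (ι : (CommGroup.torsion Fbarˣ) →* Circle) (hι : Function.Injective ι) :
    Nonempty (XChar Fbar ι) ∧ CompactSpace (XChar Fbar ι) ∧ T2Space (XChar Fbar ι) ∧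
      ConnectedSpace (XChar Fbar ι) ∧
      (∀ (σ : Fbar ≃ₐ[F] Fbar) (χ : XChar Fbar ι),
        (∀ x : Fbarˣ, χ.1 (Units.map (σ : Fbar →* Fbar) x) = χ.1 x) → σ = 1) ∧
      (Nonempty (XF F Fbar ι) ∧ ConnectedSpace (XF F Fbar ι) ∧
        CompactSpace (XF F Fbar ι) ∧ T2Space (XF F Fbar ι)) := by
  have : IsAlgClosed Fbar := IsAlgClosure.isAlgClosed F
  refine ⟨inferInstance, inferInstance, inferInstance, inferInstance, fun σ χ h => ?_,
    inferInstance, inferInstance, inferInstance, inferInstance⟩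
  exact AlgEquiv.eq_one_of_forall_apply_smul_eq hroots (XChar.injOn_torsion hι χ) h
end
end

section
/- Let F be a field of characteristic 0 containing a primitive n-th root of unity for every n ≥ 1, and let F̄ be an algebraic closure of F. Then the absolute Galois group Gal(F̄/F) is torsion-free: if σ is an automorphism of F̄ fixing F pointwise and σ^m = id for some integer m ≥ 1, then σ = id. -/
open Module in
/-- Auxiliary: there is no automorphism of prime order `p` of an algebraic closure of a
characteristic-zero field containing all roots of unity. -/
theorem key_lemma (F Fbar : Type*) [Field F] [CharZero F] [Field Fbar]
    [Algebra F Fbar] [IsAlgClosure F Fbar]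
    (hroots : ∀ n : ℕ, 0 < n → ∃ ζ : F, IsPrimitiveRoot ζ n)
    (τ : Fbar ≃ₐ[F] Fbar) (p : ℕ) (hp : p.Prime) (hτ : orderOf τ = p) : False := by
  classical
  have : IsAlgClosed Fbar := IsAlgClosure.isAlgClosed F
  set G := Subgroup.zpowers τ with hG
  have hcard : Nat.card G = p := by rw [hG, Nat.card_zpowers, hτ]
  have hfin : Finite G := Nat.finite_of_card_ne_zero (hcard ▸ hp.pos.ne')
  have : Fintype G := Fintype.ofFinite G
  have hfaith : FaithfulSMul G Fbar := ⟨by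
    rintro ⟨g, hg⟩ ⟨g', hg'⟩ h
    exact Subtype.ext (AlgEquiv.ext fun x => h x)⟩
  set K := FixedPoints.subfield G Fbar with hK
  have hgal : IsGalois K Fbar := ⟨⟩
  have hfr : finrank K Fbar = p := by
    rw [FixedPoints.finrank_eq_card G Fbar, ← Nat.card_eq_fintype_card, hcard]
  have hcyc : IsCyclic (Fbar ≃ₐ[K] Fbar) := by
    have : IsCyclic G := by
      constructor
      exact ⟨⟨τ, Subgroup.mem_zpowers τ⟩, fun ⟨g, hg⟩ => by
        obtain ⟨n, rfl⟩ := hg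
        exact ⟨n, by ext; simp⟩⟩
    exact isCyclic_of_surjective _ (FixedPoints.toAlgAutMulEquiv G Fbar).surjective
  -- K contains all primitive roots of unity
  have hKroots : ∀ n : ℕ, 0 < n → ∃ ζ : K, IsPrimitiveRoot ζ n := by
    intro n hn
    obtain ⟨ζ, hζ⟩ := hroots n hn
    have hζ' : IsPrimitiveRoot (algebraMap F Fbar ζ) n :=
      hζ.map_of_injective (algebraMap F Fbar).injective
    have hmem : algebraMap F Fbar ζ ∈ K := fun g => g.1.commutes ζ
    refine ⟨⟨algebraMap F Fbar ζ, hmem⟩, ?_, ?_⟩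
    · exact Subtype.ext (by simpa using hζ'.pow_eq_one)
    · intro l hl
      exact hζ'.dvd_of_pow_eq_one l (by simpa using congrArg Subtype.val hl)
  -- τ fixes K pointwise
  have hfix : ∀ x : K, τ (x : Fbar) = x := fun x => x.2 ⟨τ, Subgroup.mem_zpowers τ⟩
  have hτp : τ ^ p = 1 := hτ ▸ pow_orderOf_eq_one τ
  -- a primitive p²-th root of unity η in K
  obtain ⟨η, hη⟩ := hKroots (p ^ 2) (pow_pos hp.pos 2)
  have hprim : (primitiveRoots (finrank K Fbar) K).Nonempty := by
    rw [hfr]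
    exact ⟨η ^ p, (mem_primitiveRoots hp.pos).mpr (hη.pow (pow_pos hp.pos 2) (by ring))⟩
  -- Kummer: Fbar = K(α), α ^ p = a ∈ K
  obtain ⟨α, ⟨a, ha⟩, hα⟩ := exists_root_adjoin_eq_top_of_isCyclic K Fbar hprim
  rw [hfr] at ha
  -- τ α ≠ α
  have hτα : τ α ≠ α := by
    intro h
    have hmem : α ∈ K := fun g =>
      Subgroup.zpowers_le.mpr (show τ ∈ MulAction.stabilizer (Fbar ≃ₐ[F] Fbar) α from h) g.2
    have hle := IntermediateField.adjoin_simple_le_iff.mpr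
      (IntermediateField.mem_bot.mpr ⟨⟨α, hmem⟩, rfl⟩ :
        α ∈ (⊥ : IntermediateField K Fbar))
    rw [hα] at hle
    have h1 : (⊥ : IntermediateField K Fbar) = ⊤ := top_le_iff.mp hle
    have h2 := IntermediateField.finrank_bot (F := K) (E := Fbar)
    rw [h1, IntermediateField.finrank_top', hfr] at h2
    exact hp.one_lt.ne' h2
  have hα0 : α ≠ 0 := fun h => hτα (by rw [h, map_zero])
  have hτα0 : τ α ≠ 0 := fun h => hα0 (τ.injective (by rw [h, map_zero]))
  set z : Fbar := algebraMap K Fbar η with hz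
  have hzprim : IsPrimitiveRoot z (p ^ 2) := hη.map_of_injective (algebraMap K Fbar).injective
  have hzfix : τ z = z := hfix η
  have hζprim : IsPrimitiveRoot (z ^ p) p := hzprim.pow (pow_pos hp.pos 2) (by ring)
  have : NeZero p := ⟨hp.pos.ne'⟩
  have key : (τ α) ^ p = α ^ p := by
    rw [← map_pow, ← ha, show algebraMap K Fbar a = ↑a from rfl, hfix]
  have hwp : (τ α / α) ^ p = 1 := by rw [div_pow, key, div_self (pow_ne_zero _ hα0)]
  obtain ⟨k, hk_lt, hk⟩ := hζprim.eq_pow_of_pow_eq_one hwp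
  have hw1 : τ α / α ≠ 1 := fun h => hτα (by
    rw [div_eq_one_iff_eq hα0] at h; exact h)
  have hk0 : k ≠ 0 := fun h => hw1 (by rw [← hk, h, pow_zero])
  obtain ⟨c, hc⟩ := IsAlgClosed.exists_pow_nat_eq α hp.pos
  have hc0 : c ≠ 0 := fun h => hα0 (by rw [← hc, h, zero_pow hp.pos.ne'])
  have hz0 : z ≠ 0 := hzprim.ne_zero (pow_pos hp.pos 2).ne'
  have hvp : (τ c / (z ^ k * c)) ^ p = 1 := by
    rw [div_pow, mul_pow, ← map_pow, hc, show (z ^ k) ^ p = (z ^ p) ^ k by ring, hk,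
      div_mul_cancel₀ _ hα0, div_self hτα0]
  obtain ⟨l, hl_lt, hl⟩ := hζprim.eq_pow_of_pow_eq_one hvp
  have hstep : τ c = z ^ (p * l + k) * c := by
    have h2 : (z ^ p) ^ l * (z ^ k * c) = τ c := by
      rw [hl, div_mul_cancel₀]
      exact mul_ne_zero (pow_ne_zero _ hz0) hc0
    rw [← h2, pow_add, pow_mul]
    ring
  have hiter : ∀ j : ℕ, (τ ^ j) c = z ^ (j * (p * l + k)) * c := by
    intro j
    induction j with
    | zero => simp
    | succ j ih =>
        rw [pow_succ', AlgEquiv.mul_apply, ih, map_mul, map_pow, hzfix, hstep]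
        rw [show (j + 1) * (p * l + k) = j * (p * l + k) + (p * l + k) by ring, pow_add]
        ring
  have hfin2 := hiter p
  rw [hτp] at hfin2
  have hz1 : z ^ (p * (p * l + k)) = 1 := by
    have : z ^ (p * (p * l + k)) * c = 1 * c := by rw [one_mul, ← hfin2]; rfl
    exact mul_right_cancel₀ hc0 this
  have hdvd : p ^ 2 ∣ p * (p * l + k) := hzprim.dvd_of_pow_eq_one _ hz1
  have hdvd2 : p ∣ k := by
    rw [pow_two] at hdvd
    exact (Nat.dvd_add_right ⟨l, rfl⟩).mp ((mul_dvd_mul_iff_left (a := p) hp.pos.ne').mp hdvd)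
  have := Nat.le_of_dvd (Nat.pos_of_ne_zero hk0) hdvd2
  omega

/-- The absolute Galois group of a field `F` of characteristic `0` containing a primitive
`n`-th root of unity for every `n ≥ 1` is torsion-free: any automorphism of an algebraic
closure `F̄` over `F` of finite order is the identity. -/
theorem absolute_galois_torsion_free (F Fbar : Type*) [Field F] [CharZero F] [Field Fbar]
    [Algebra F Fbar] [IsAlgClosure F Fbar]
    (hroots : ∀ n : ℕ, 0 < n → ∃ ζ : F, IsPrimitiveRoot ζ n)
    (σ : Fbar ≃ₐ[F] Fbar) (m : ℕ) (hm : 1 ≤ m) (hσ : σ ^ m = 1) :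
    σ = 1 := by
  by_contra hne
  have hfo : IsOfFinOrder σ := isOfFinOrder_iff_pow_eq_one.mpr ⟨m, hm, hσ⟩
  have hd1 : orderOf σ ≠ 1 := fun h => hne (orderOf_eq_one_iff.mp h)
  obtain ⟨p, hp, hpd⟩ := Nat.exists_prime_and_dvd hd1
  exact key_lemma F Fbar hroots (σ ^ (orderOf σ / p)) p hp
    (orderOf_pow_orderOf_div hfo.orderOf_pos.ne' hpd)
end

section
/- Let ℓ be a prime and n ≥ 1 an integer, and assume ℓ is odd or n ≥ 2. Let H be a closed subgroup of the unit group ℤ_ℓˣ of the ring of ℓ-adic integers such that H is contained in U_{ℓⁿ} = 1 + ℓⁿℤ_ℓ but not contained in U_{ℓ^{n+1}} = 1 + ℓ^{n+1}ℤ_ℓ. Then H = 1 + ℓⁿℤ_ℓ. (This is the key content of the determination of the image of the ℓ-adic cyclotomic character of a field F with μ_{ℓⁿ} ⊆ F and n maximal: that image is a closed subgroup of ℤ_ℓˣ contained in U_{ℓⁿ} but not in U_{ℓ^{n+1}}, hence equals U_{ℓⁿ}.) -/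
/-- The set `1 + ℓⁿ ℤ_ℓ` of units of `ℤ_ℓ` congruent to `1` modulo `ℓⁿ`. -/
def onePlusPow (ℓ : ℕ) [Fact ℓ.Prime] (n : ℕ) : Set ℤ_[ℓ]ˣ :=
  {u : ℤ_[ℓ]ˣ | ∃ z : ℤ_[ℓ], (u : ℤ_[ℓ]) = 1 + (ℓ : ℤ_[ℓ]) ^ n * z}

namespace ClosedSubgroupAux

open Finset Filter Topology

variable {p : ℕ} [hp : Fact p.Prime]

lemma dvd_iff_norm_le {x : ℤ_[p]} {n : ℕ} :
    (p : ℤ_[p]) ^ n ∣ x ↔ ‖x‖ ≤ (p : ℝ) ^ (-n : ℤ) := by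
  rw [PadicInt.norm_le_pow_iff_mem_span_pow, Ideal.mem_span_singleton]

lemma norm_le_inv_of_dvd {x : ℤ_[p]} (h : (p : ℤ_[p]) ∣ x) : ‖x‖ ≤ (p : ℝ) ^ (-1 : ℤ) := by
  have h1 : (p : ℤ_[p]) ^ 1 ∣ x := by simpa using h
  simpa using dvd_iff_norm_le.mp h1

lemma sub_one_dvd_pow_sub_one (x : ℤ_[p]) (m : ℕ) : (x - 1) ∣ x ^ m - 1 := by
  simpa using sub_dvd_pow_sub_pow x 1 m

lemma sub_one_dvd_geom_sub (x : ℤ_[p]) (m : ℕ) :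
    (x - 1) ∣ (∑ i ∈ range m, x ^ i) - (m : ℤ_[p]) := by
  have h : (∑ i ∈ range m, x ^ i) - (m : ℤ_[p]) = ∑ i ∈ range m, (x ^ i - 1) := by
    rw [Finset.sum_sub_distrib]
    simp
  rw [h]
  exact Finset.dvd_sum fun i _ => sub_one_dvd_pow_sub_one x i

lemma sq_dvd_aux (x : ℤ_[p]) (i : ℕ) :
    (x - 1) ^ 2 ∣ x ^ i - 1 - (i : ℤ_[p]) * (x - 1) := by
  have h1 : x ^ i - 1 - (i : ℤ_[p]) * (x - 1)
      = ((∑ j ∈ range i, x ^ j) - (i : ℤ_[p])) * (x - 1) := by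
    rw [sub_mul, geom_sum_mul]
  rw [h1, sq]
  exact mul_dvd_mul (sub_one_dvd_geom_sub x i) dvd_rfl

lemma pow_sub_one_eq (x : ℤ_[p]) (m : ℕ) :
    ∃ e : ℤ_[p], x ^ m - 1 = (m : ℤ_[p]) * (x - 1) + (x - 1) ^ 2 * e := by
  obtain ⟨e, he⟩ := sq_dvd_aux x m
  exact ⟨e, by linear_combination he⟩

lemma pow_p_sub_one_eq (x : ℤ_[p]) :
    ∃ d : ℤ_[p], x ^ p - 1 =
      (x - 1) * ((p : ℤ_[p]) + (x - 1) * ((∑ i ∈ range p, i : ℕ) : ℤ_[p]) + (x - 1) ^ 2 * d) := by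
  have hsum : (x - 1) ^ 2 ∣ (∑ i ∈ range p, x ^ i) - (p : ℤ_[p])
      - ((∑ i ∈ range p, i : ℕ) : ℤ_[p]) * (x - 1) := by
    have h : (∑ i ∈ range p, x ^ i) - (p : ℤ_[p])
        - ((∑ i ∈ range p, i : ℕ) : ℤ_[p]) * (x - 1)
        = ∑ i ∈ range p, (x ^ i - 1 - (i : ℤ_[p]) * (x - 1)) := by
      push_cast
      rw [Finset.sum_sub_distrib, Finset.sum_sub_distrib, Finset.sum_mul]
      simp [card_range]
    rw [h]
    exact Finset.dvd_sum fun i _ => sq_dvd_aux x i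
  obtain ⟨d, hd⟩ := hsum
  refine ⟨d, ?_⟩
  have hgeom := geom_sum_mul x p
  linear_combination (x - 1) * hd - hgeom

lemma lte_step {n : ℕ} (hn : 1 ≤ n) (hodd : p ≠ 2 ∨ 2 ≤ n) {x : ℤ_[p]}
    (hx : ‖x - 1‖ = (p : ℝ) ^ (-n : ℤ)) :
    ‖x ^ p - 1‖ = (p : ℝ) ^ (-(n + 1 : ℕ) : ℤ) := by
  obtain ⟨d, hd⟩ := pow_p_sub_one_eq x
  set k : ℕ := ∑ i ∈ range p, i with hk
  have hone_lt : (1 : ℝ) < p := by exact_mod_cast hp.out.one_lt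
  have hne : ((p : ℝ)) ≠ 0 := by positivity
  have htail : ‖(x - 1) * (k : ℤ_[p]) + (x - 1) ^ 2 * d‖ < (p : ℝ) ^ (-1 : ℤ) := by
    have h2 : ‖(x - 1) ^ 2 * d‖ ≤ (p : ℝ) ^ (-2 : ℤ) := by
      rw [norm_mul, pow_two, norm_mul, hx]
      calc (p:ℝ) ^ (-n:ℤ) * (p:ℝ) ^ (-n:ℤ) * ‖d‖ ≤ (p:ℝ) ^ (-n:ℤ) * (p:ℝ) ^ (-n:ℤ) * 1 := by
            have := PadicInt.norm_le_one d
            have h0 : (0:ℝ) ≤ (p:ℝ) ^ (-n:ℤ) * (p:ℝ) ^ (-n:ℤ) := by positivity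
            nlinarith
        _ = (p:ℝ) ^ ((-n:ℤ) + (-n:ℤ)) := by rw [mul_one, ← zpow_add₀ hne]
        _ ≤ (p:ℝ) ^ (-2:ℤ) := zpow_le_zpow_right₀ hone_lt.le (by omega)
    have h1 : ‖(x - 1) * (k : ℤ_[p])‖ ≤ (p : ℝ) ^ (-2 : ℤ) := by
      rcases hodd with hodd | hn2
      · have hdvd : p ∣ k := by
          have h2k : k * 2 = p * (p - 1) := Finset.sum_range_id_mul_two p
          have : p ∣ k * 2 := h2k ▸ Dvd.intro _ rfl
          rcases (Nat.Prime.dvd_mul hp.out).mp this with h | h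
          · exact h
          · exact absurd (((Nat.prime_dvd_prime_iff_eq hp.out Nat.prime_two).mp h)) hodd
        have : ‖(k : ℤ_[p])‖ ≤ (p:ℝ) ^ (-1:ℤ) := by
          refine norm_le_inv_of_dvd ?_
          exact_mod_cast Nat.cast_dvd_cast (α := ℤ_[p]) hdvd
        rw [norm_mul, hx]
        calc (p:ℝ) ^ (-n:ℤ) * ‖(k : ℤ_[p])‖ ≤ (p:ℝ) ^ (-n:ℤ) * (p:ℝ) ^ (-1:ℤ) := by
              have h0 : (0:ℝ) ≤ (p:ℝ) ^ (-n:ℤ) := by positivity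
              nlinarith [norm_nonneg (k : ℤ_[p])]
          _ = (p:ℝ) ^ ((-n:ℤ) + (-1:ℤ)) := (zpow_add₀ hne _ _).symm
          _ ≤ (p:ℝ) ^ (-2:ℤ) := zpow_le_zpow_right₀ hone_lt.le (by omega)
      · rw [norm_mul, hx]
        calc (p:ℝ) ^ (-n:ℤ) * ‖(k : ℤ_[p])‖ ≤ (p:ℝ) ^ (-n:ℤ) * 1 := by
              have h0 : (0:ℝ) ≤ (p:ℝ) ^ (-n:ℤ) := by positivity
              nlinarith [PadicInt.norm_le_one (k : ℤ_[p]), norm_nonneg (k : ℤ_[p])]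
          _ = (p:ℝ) ^ (-n:ℤ) := mul_one _
          _ ≤ (p:ℝ) ^ (-2:ℤ) := zpow_le_zpow_right₀ hone_lt.le (by omega)
    calc ‖(x - 1) * (k : ℤ_[p]) + (x - 1) ^ 2 * d‖
        ≤ max ‖(x - 1) * (k : ℤ_[p])‖ ‖(x - 1) ^ 2 * d‖ := PadicInt.nonarchimedean _ _
      _ ≤ (p:ℝ) ^ (-2:ℤ) := max_le h1 h2
      _ < (p:ℝ) ^ (-1:ℤ) := zpow_lt_zpow_right₀ hone_lt (by omega)
  have hnp : ‖(p : ℤ_[p])‖ = (p:ℝ) ^ (-1:ℤ) := by rw [PadicInt.norm_p, zpow_neg, zpow_one]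
  have hinner : ‖(p : ℤ_[p]) + ((x - 1) * (k : ℤ_[p]) + (x - 1) ^ 2 * d)‖ = (p:ℝ) ^ (-1:ℤ) := by
    have hne' : ‖(p : ℤ_[p])‖ ≠ ‖(x - 1) * (k : ℤ_[p]) + (x - 1) ^ 2 * d‖ := by
      rw [hnp]; exact (ne_of_gt htail)
    rw [PadicInt.norm_add_eq_max_of_ne hne', hnp]
    exact max_eq_left htail.le
  rw [hd, add_assoc, norm_mul, hx, hinner, ← zpow_add₀ hne]
  congr 1
  push_cast
  ring

lemma lte_iter {n : ℕ} (hn : 1 ≤ n) (hodd : p ≠ 2 ∨ 2 ≤ n) {x : ℤ_[p]}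
    (hx : ‖x - 1‖ = (p : ℝ) ^ (-n : ℤ)) (k : ℕ) :
    ‖x ^ p ^ k - 1‖ = (p : ℝ) ^ (-(n + k : ℕ) : ℤ) := by
  induction k with
  | zero => simpa using hx
  | succ k ih =>
    have h1 : x ^ p ^ (k + 1) = (x ^ p ^ k) ^ p := by rw [pow_succ, pow_mul]
    have h2 := lte_step (n := n + k) (by omega) (hodd.imp_right (by omega)) ih
    rw [h1]
    exact h2

lemma approx {n : ℕ} (hn : 1 ≤ n) (hodd : p ≠ 2 ∨ 2 ≤ n) (h u : ℤ_[p]ˣ)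
    (hh : ‖(h : ℤ_[p]) - 1‖ = (p : ℝ) ^ (-n : ℤ))
    (hu : ‖(u : ℤ_[p]) - 1‖ ≤ (p : ℝ) ^ (-n : ℤ)) (k : ℕ) :
    ∃ m : ℕ, ‖(u : ℤ_[p]) - (h : ℤ_[p]) ^ m‖ ≤ (p : ℝ) ^ (-(n + k : ℕ) : ℤ) := by
  have hone_lt : (1 : ℝ) < p := by exact_mod_cast hp.out.one_lt
  have hne : ((p : ℝ)) ≠ 0 := by positivity
  induction k with
  | zero => exact ⟨0, by simpa using hu⟩
  | succ k ih =>
    obtain ⟨m, hm⟩ := ih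
    set N : ℕ := n + k with hN
    have hg : ‖(h : ℤ_[p]) ^ p ^ k - 1‖ = (p : ℝ) ^ (-N : ℤ) := lte_iter hn hodd hh k
    obtain ⟨zw, hzw⟩ : (p : ℤ_[p]) ^ N ∣ (h : ℤ_[p]) ^ p ^ k - 1 := dvd_iff_norm_le.mpr hg.le
    have hzw1 : ‖zw‖ = 1 := by
      rw [hzw, norm_mul, PadicInt.norm_p_pow] at hg
      have hp0 : ((p:ℝ) ^ (-N : ℤ)) ≠ 0 := by positivity
      field_simp at hg
      exact hg
    obtain ⟨zv, hzv⟩ : (p : ℤ_[p]) ^ N ∣ (u : ℤ_[p]) - (h : ℤ_[p]) ^ m := dvd_iff_norm_le.mpr hm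
    have hzwu : IsUnit zw := PadicInt.isUnit_iff.mpr hzw1
    set b : ℤ_[p] := zv * ((hzwu.unit⁻¹ : ℤ_[p]ˣ) : ℤ_[p]) * (((h⁻¹ : ℤ_[p]ˣ) ^ m : ℤ_[p]ˣ) : ℤ_[p])
      with hb
    set a : ℕ := (PadicInt.toZMod b).val with ha
    haveI : NeZero p := ⟨hp.out.ne_zero⟩
    have hba : ‖b - (a : ℤ_[p])‖ ≤ (p : ℝ) ^ (-1 : ℤ) := by
      refine norm_le_inv_of_dvd ?_
      have hspec := PadicInt.toZMod_spec b
      rw [PadicInt.maximalIdeal_eq_span_p, Ideal.mem_span_singleton] at hspec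
      rwa [ha, ZMod.natCast_val (PadicInt.toZMod b)]
    have e1gen : ∀ (v : ℤ_[p]ˣ) (z : ℤ_[p]), (v : ℤ_[p]) = z → ((v⁻¹ : ℤ_[p]ˣ) : ℤ_[p]) * z = 1 := by
      rintro v z rfl
      exact Units.inv_mul v
    have e1 : ((hzwu.unit⁻¹ : ℤ_[p]ˣ) : ℤ_[p]) * zw = 1 := e1gen _ _ hzwu.unit_spec
    have e2 : (((h⁻¹ : ℤ_[p]ˣ) ^ m : ℤ_[p]ˣ) : ℤ_[p]) * (h : ℤ_[p]) ^ m = 1 := by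
      rw [← Units.val_pow_eq_pow_val, ← Units.val_mul, ← mul_pow, inv_mul_cancel, one_pow,
        Units.val_one]
    have hbzv : b * ((h : ℤ_[p]) ^ m) * zw = zv := by
      have hcalc : b * ((h : ℤ_[p]) ^ m) * zw
          = zv * (((hzwu.unit⁻¹ : ℤ_[p]ˣ) : ℤ_[p]) * zw)
            * ((((h⁻¹ : ℤ_[p]ˣ) ^ m : ℤ_[p]ˣ) : ℤ_[p]) * (h : ℤ_[p]) ^ m) := by
        rw [hb]; ring
      rw [hcalc, e1, e2]; ring
    obtain ⟨e, he⟩ := pow_sub_one_eq ((h : ℤ_[p]) ^ p ^ k) a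
    refine ⟨m + p ^ k * a, ?_⟩
    have key : (u : ℤ_[p]) - (h : ℤ_[p]) ^ (m + p ^ k * a)
        = (p : ℤ_[p]) ^ N * ((b - (a : ℤ_[p])) * ((h : ℤ_[p]) ^ m * zw))
          - (h : ℤ_[p]) ^ m * (((h : ℤ_[p]) ^ p ^ k - 1) ^ 2 * e) := by
      have hpow : (h : ℤ_[p]) ^ (m + p ^ k * a) = (h : ℤ_[p]) ^ m * ((h : ℤ_[p]) ^ p ^ k) ^ a := by
        rw [pow_add, pow_mul]
      rw [hpow]
      linear_combination hzv - (h : ℤ_[p]) ^ m * he - (a : ℤ_[p]) * (h : ℤ_[p]) ^ m * hzw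
        - (p : ℤ_[p]) ^ N * hbzv
    have hhm : ‖(h : ℤ_[p]) ^ m‖ = 1 := by
      have := PadicInt.norm_units (h ^ m)
      rwa [Units.val_pow_eq_pow_val] at this
    have hA : ‖(p : ℤ_[p]) ^ N * ((b - (a : ℤ_[p])) * ((h : ℤ_[p]) ^ m * zw))‖
        ≤ (p : ℝ) ^ (-(N + 1 : ℕ) : ℤ) := by
      rw [norm_mul, norm_mul, norm_mul, PadicInt.norm_p_pow,
        hhm, hzw1, one_mul, mul_one]
      calc (p:ℝ) ^ (-N : ℤ) * ‖b - (a : ℤ_[p])‖ ≤ (p:ℝ) ^ (-N : ℤ) * (p:ℝ) ^ (-1 : ℤ) :=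
            mul_le_mul_of_nonneg_left hba (by positivity)
        _ = (p:ℝ) ^ (-(N + 1 : ℕ) : ℤ) := by
            rw [← zpow_add₀ hne]
            congr 1
            push_cast
            ring
    have hB : ‖(h : ℤ_[p]) ^ m * (((h : ℤ_[p]) ^ p ^ k - 1) ^ 2 * e)‖
        ≤ (p : ℝ) ^ (-(N + 1 : ℕ) : ℤ) := by
      rw [norm_mul, norm_mul, hhm, one_mul, pow_two, norm_mul, hg]
      calc (p:ℝ) ^ (-N:ℤ) * (p:ℝ) ^ (-N:ℤ) * ‖e‖ ≤ (p:ℝ) ^ (-N:ℤ) * (p:ℝ) ^ (-N:ℤ) * 1 := by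
            have h0 : (0:ℝ) ≤ (p:ℝ) ^ (-N:ℤ) * (p:ℝ) ^ (-N:ℤ) := by positivity
            nlinarith [PadicInt.norm_le_one e, norm_nonneg e]
        _ = (p:ℝ) ^ ((-N:ℤ) + (-N:ℤ)) := by rw [mul_one, ← zpow_add₀ hne]
        _ ≤ (p:ℝ) ^ (-(N + 1 : ℕ) : ℤ) := zpow_le_zpow_right₀ hone_lt.le (by
            have hN1 : 1 ≤ N := le_trans hn (Nat.le_add_right n k)
            omega)
    have hfinal : ‖(u : ℤ_[p]) - (h : ℤ_[p]) ^ (m + p ^ k * a)‖ ≤ (p : ℝ) ^ (-(N + 1 : ℕ) : ℤ) := by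
      rw [key, sub_eq_add_neg]
      refine le_trans (PadicInt.nonarchimedean _ _) ?_
      rw [norm_neg]
      exact max_le hA hB
    have hNk : n + (k + 1) = N + 1 := by omega
    rw [hNk]
    exact hfinal

lemma mem_onePlusPow_iff {n : ℕ} {u : ℤ_[p]ˣ} :
    u ∈ onePlusPow p n ↔ ‖(u : ℤ_[p]) - 1‖ ≤ (p : ℝ) ^ (-n : ℤ) := by
  rw [show (‖(u : ℤ_[p]) - 1‖ ≤ (p : ℝ) ^ (-n : ℤ)) ↔ (p : ℤ_[p]) ^ n ∣ ((u : ℤ_[p]) - 1) from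
    by rw [PadicInt.norm_le_pow_iff_mem_span_pow, Ideal.mem_span_singleton]]
  constructor
  · rintro ⟨z, hz⟩
    exact ⟨z, by rw [hz]; ring⟩
  · rintro ⟨z, hz⟩
    exact ⟨z, by linear_combination hz⟩

lemma norm_inv_sub_inv (x y : ℤ_[p]ˣ) :
    ‖((x⁻¹ : ℤ_[p]ˣ) : ℤ_[p]) - ((y⁻¹ : ℤ_[p]ˣ) : ℤ_[p])‖ = ‖(y : ℤ_[p]) - (x : ℤ_[p])‖ := by
  have hx : ((x⁻¹ : ℤ_[p]ˣ) : ℤ_[p]) * (x : ℤ_[p]) = 1 := Units.inv_mul x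
  have hy : ((y⁻¹ : ℤ_[p]ˣ) : ℤ_[p]) * (y : ℤ_[p]) = 1 := Units.inv_mul y
  have key : ((x⁻¹ : ℤ_[p]ˣ) : ℤ_[p]) - ((y⁻¹ : ℤ_[p]ˣ) : ℤ_[p])
      = ((x⁻¹ : ℤ_[p]ˣ) : ℤ_[p]) * ((y⁻¹ : ℤ_[p]ˣ) : ℤ_[p]) * ((y : ℤ_[p]) - (x : ℤ_[p])) := by
    linear_combination ((y⁻¹ : ℤ_[p]ˣ) : ℤ_[p]) * hx - ((x⁻¹ : ℤ_[p]ˣ) : ℤ_[p]) * hy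
  rw [key, norm_mul, norm_mul, PadicInt.norm_units, PadicInt.norm_units,
    one_mul, one_mul]

lemma tendsto_of_bound (f : ℕ → ℤ_[p]ˣ) (u : ℤ_[p]ˣ) {n : ℕ}
    (hb : ∀ k, ‖(u : ℤ_[p]) - ((f k : ℤ_[p]))‖ ≤ (p : ℝ) ^ (-(n + k : ℕ) : ℤ)) :
    Tendsto f atTop (𝓝 u) := by
  have hone_lt : (1 : ℝ) < p := by exact_mod_cast hp.out.one_lt
  have hne : ((p : ℝ)) ≠ 0 := by positivity
  have hgeq : ∀ k : ℕ, (p:ℝ) ^ (-(n + k : ℕ) : ℤ) = (p:ℝ) ^ (-n:ℤ) * ((p:ℝ)⁻¹) ^ k := by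
    intro k
    rw [inv_pow, ← zpow_natCast, ← zpow_neg, ← zpow_add₀ hne]
    congr 1
    push_cast
    ring
  have hg0 : Tendsto (fun k : ℕ => (p:ℝ) ^ (-(n + k : ℕ) : ℤ)) atTop (𝓝 0) := by
    simp only [hgeq]
    have := (tendsto_pow_atTop_nhds_zero_of_lt_one (by positivity)
      (inv_lt_one_of_one_lt₀ hone_lt)).const_mul ((p:ℝ) ^ (-n:ℤ))
    simpa using this
  have t1 : Tendsto (fun k => ((f k : ℤ_[p]))) atTop (𝓝 (u : ℤ_[p])) := by
    rw [tendsto_iff_norm_sub_tendsto_zero]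
    refine squeeze_zero (fun k => norm_nonneg _) (fun k => ?_) hg0
    rw [norm_sub_rev]
    exact hb k
  have t2 : Tendsto (fun k => (((f k)⁻¹ : ℤ_[p]ˣ) : ℤ_[p])) atTop (𝓝 ((u⁻¹ : ℤ_[p]ˣ) : ℤ_[p])) := by
    rw [tendsto_iff_norm_sub_tendsto_zero]
    refine squeeze_zero (fun k => norm_nonneg _) (fun k => ?_) hg0
    rw [norm_inv_sub_inv]
    exact hb k
  rw [Units.isInducing_embedProduct.tendsto_nhds_iff]
  have hcomp : (Units.embedProduct ℤ_[p]) ∘ f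
      = fun k => (((f k : ℤ_[p])), MulOpposite.op (((f k)⁻¹ : ℤ_[p]ˣ) : ℤ_[p])) := rfl
  rw [hcomp]
  exact t1.prodMk_nhds ((MulOpposite.continuous_op.tendsto _).comp t2)

end ClosedSubgroupAux

open ClosedSubgroupAux Filter Topology in
/-- Let `ℓ` be a prime and `n ≥ 1`, with `ℓ` odd or `n ≥ 2`.  Any closed subgroup `H` of
`ℤ_ℓˣ` contained in `U_{ℓⁿ} = 1 + ℓⁿℤ_ℓ` but not contained in `U_{ℓ^{n+1}}` equals
`1 + ℓⁿℤ_ℓ`. -/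
theorem closed_subgroup_eq_onePlusPow (ℓ : ℕ) [Fact ℓ.Prime] (n : ℕ) (hn : 1 ≤ n)
    (hodd : ℓ ≠ 2 ∨ 2 ≤ n) (H : Subgroup ℤ_[ℓ]ˣ)
    (hclosed : IsClosed (H : Set ℤ_[ℓ]ˣ))
    (hle : (H : Set ℤ_[ℓ]ˣ) ⊆ onePlusPow ℓ n)
    (hnle : ¬ (H : Set ℤ_[ℓ]ˣ) ⊆ onePlusPow ℓ (n + 1)) :
    (H : Set ℤ_[ℓ]ˣ) = onePlusPow ℓ n := by
  obtain ⟨h0, hH, hnot⟩ := Set.not_subset.mp hnle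
  have hhn : ‖(h0 : ℤ_[ℓ]) - 1‖ ≤ (ℓ : ℝ) ^ (-n : ℤ) := mem_onePlusPow_iff.mp (hle hH)
  have hhn1 : ¬ ‖(h0 : ℤ_[ℓ]) - 1‖ ≤ (ℓ : ℝ) ^ (-(n + 1 : ℕ) : ℤ) := fun hc =>
    hnot (mem_onePlusPow_iff.mpr hc)
  have hexact : ‖(h0 : ℤ_[ℓ]) - 1‖ = (ℓ : ℝ) ^ (-n : ℤ) := by
    rcases lt_or_eq_of_le hhn with hlt | heq
    · exfalso
      apply hhn1
      have hle1 := (PadicInt.norm_lt_pow_iff_norm_le_pow_sub_one _ _).mp hlt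
      have he : (-(n + 1 : ℕ) : ℤ) = (-n : ℤ) - 1 := by push_cast; ring
      rw [he]
      exact hle1
    · exact heq
  apply Set.Subset.antisymm hle
  intro u hu
  have hu' : ‖(u : ℤ_[ℓ]) - 1‖ ≤ (ℓ : ℝ) ^ (-n : ℤ) := mem_onePlusPow_iff.mp hu
  choose m hm using fun k => approx hn hodd h0 u hexact hu' k
  have ht : Tendsto (fun k => h0 ^ m k) atTop (𝓝 u) := by
    refine tendsto_of_bound (n := n) _ _ fun k => ?_
    rw [Units.val_pow_eq_pow_val]
    exact hm k
  have hmem : u ∈ closure (H : Set ℤ_[ℓ]ˣ) :=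
    mem_closure_of_tendsto ht (Eventually.of_forall fun k => H.pow_mem hH (m k))
  rwa [hclosed.closure_eq] at hmem
end
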